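/- arXiv:2401.05956 — 9 statements merged into one kernel-verified Lean document; each statement's English description precedes it below -/
import Mathlib

section
/- Let m and k be integers with 2 ≤ k ≤ m, and let a : Fin m → ℤ satisfy Σ_j a j ≥ 0. Set A = Σ_j |a j| and T = Σ_j a j, and construct a two-machine instance as follows. Machine 1 contains: for each index j with a j ≥ 0, one job of processing time m·(a j) + 1 (a 'k-sum job' of machine 1); k − 1 jobs each of processing time 3·m·A; and one job of processing time 3·m·A + 1. Machine 2 contains: for each index j with a j < 0, one job of processing time −m·(a j) (a 'k-sum job' of machine 2); and one job of processing time m·(T + 3·k·A). Let L₁ and L₂ denote the total processing time of the jobs on machine 1 and machine 2, respectively. Then there exist a set U₁ of jobs on machine 1 and a set U₂ of jobs on machine 2 with |U₁| + |U₂| = k and 0 < p(U₁) − p(U₂) < L₁ − L₂ (where p(U) denotes the total processing time of the jobs in U) if and only if there exists a subset Γ ⊆ Fin m with |Γ| = k and Σ_{j∈Γ} a j = 0. -/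
/-- Jobs on machine 1: a k-sum job for each `j` with `a j ≥ 0`, plus `k - 1` filler
jobs, plus one extra job. -/
abbrev KSJob1 (m k : ℕ) (a : Fin m → ℤ) :=
  {j : Fin m // 0 ≤ a j} ⊕ (Fin (k - 1) ⊕ Unit)

/-- Jobs on machine 2: a k-sum job for each `j` with `a j < 0`, plus one big job. -/
abbrev KSJob2 (m : ℕ) (a : Fin m → ℤ) :=
  {j : Fin m // a j < 0} ⊕ Unit

/-- Processing times of the jobs on machine 1. -/
def ksp1 (m k : ℕ) (a : Fin m → ℤ) : KSJob1 m k a → ℤ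
  | Sum.inl j => m * a j.1 + 1
  | Sum.inr (Sum.inl _) => 3 * m * ∑ j, |a j|
  | Sum.inr (Sum.inr _) => 3 * m * ∑ j, |a j| + 1

/-- Processing times of the jobs on machine 2. -/
def ksp2 (m k : ℕ) (a : Fin m → ℤ) : KSJob2 m a → ℤ
  | Sum.inl j => -(m * a j.1)
  | Sum.inr _ => m * ((∑ j, a j) + 3 * k * ∑ j, |a j|)

/-!
Multiplying the numbers by `m` and adding `1` to each `k`-sum job of machine 1 makes the gain
`p(U₁) - p(U₂)` of a swap of `k`-sum jobs equal to `m * σ + v`, where `σ` is the sum of the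
swapped numbers and `v ≤ m` the number of swapped jobs of machine 1, while `L₁ - L₂ = N + 1` with
`N ≤ m` the number of `k`-sum jobs of machine 1. The jobs of size about `3 * m * A` cannot take
part in an improving swap: the big job of machine 2 outweighs all that the at most `k - 1` jobs
of machine 1 swapped with it can offer, and without it a single such job of machine 1 already
gains more than `L₁ - L₂`.
Hence an improving swap exchanges `k`-sum jobs only, and `1 ≤ m * σ + v ≤ N` forces `σ = 0`.
Conversely, a zero-sum `k`-set gives the gain `v`, which is positive because a zero-sum set
contains a nonnegative number. If all `a j` vanish (`A = 0`), every `k`-set is a zero-sum set.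
-/

open Finset

section
variable {ι : Type*} (f : ι → ℤ)

lemma exists_finset_of_subtype_nonneg_neg (s : Finset {i // 0 ≤ f i})
    (t : Finset {i // f i < 0}) :
    ∃ Γ : Finset ι, #Γ = #s + #t ∧ ∑ i ∈ Γ, f i = ∑ x ∈ s, f x + ∑ x ∈ t, f x := by
  have hdisj : Disjoint (s.map (.subtype _)) (t.map (.subtype _)) := by
    simp only [disjoint_left, mem_map, Function.Embedding.subtype_apply]
    rintro _ ⟨i, -, rfl⟩ ⟨j, -, hji⟩
    exact (hji ▸ j.2).not_ge i.2
  refine ⟨(s.map _).disjUnion (t.map _) hdisj, ?_, ?_⟩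
  · rw [card_disjUnion, card_map, card_map]
  · rw [sum_disjUnion, sum_map, sum_map]
    rfl

variable [Fintype ι]

lemma sum_subtype_abs_le {p : ι → Prop} (s : Finset (Subtype p)) :
    ∑ x ∈ s, |f x| ≤ ∑ i, |f i| :=
  calc ∑ x ∈ s, |f x| = ∑ i ∈ s.map (.subtype p), |f i| :=
        (sum_map s (.subtype p) fun i => |f i|).symm
    _ ≤ ∑ i, |f i| := sum_le_sum_of_subset_of_nonneg (subset_univ _) fun _ _ _ => abs_nonneg _

lemma sum_subtype_nonneg_le_sum_abs (s : Finset {i // 0 ≤ f i}) :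
    ∑ x ∈ s, f x ≤ ∑ i, |f i| :=
  (sum_congr rfl fun x _ => (abs_of_nonneg x.2).symm).trans_le (sum_subtype_abs_le f s)

lemma neg_sum_abs_le_sum_subtype_neg (s : Finset {i // f i < 0}) :
    -∑ i, |f i| ≤ ∑ x ∈ s, f x := by
  have : ∑ x ∈ s, |f x| = -∑ x ∈ s, f x := by
    rw [← sum_neg_distrib]
    exact sum_congr rfl fun x _ => abs_of_neg x.2
  linarith [sum_subtype_abs_le f s]

lemma sum_subtype_nonneg_add_sum_subtype_neg :
    ∑ x : {i // 0 ≤ f i}, f x + ∑ x : {i // f i < 0}, f x = ∑ i, f i := by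
  rw [← Fintype.sum_subtype_add_sum_subtype (fun i => 0 ≤ f i) f]
  congr 1
  exact Fintype.sum_equiv (Equiv.subtypeEquivRight fun i => not_le.symm) _ _ fun _ => rfl

end

lemma one_le_of_sum_abs_pos {m : ℕ} {a : Fin m → ℤ} (hA : 0 < ∑ j, |a j|) : (1 : ℤ) ≤ m := by
  obtain ⟨j, -⟩ := nonempty_of_sum_ne_zero hA.ne'
  exact_mod_cast j.pos

variable {m k : ℕ} {a : Fin m → ℤ}

lemma sum_ksp1 (U : Finset (KSJob1 m k a)) :
    ∑ x ∈ U, ksp1 m k a x = m * ∑ j ∈ U.toLeft, a j + #U.toLeft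
      + 3 * m * (∑ j, |a j|) * #U.toRight + #U.toRight.toRight := by
  rw [sum_sum_eq_sum_toLeft_add_sum_toRight, sum_sum_eq_sum_toLeft_add_sum_toRight U.toRight,
    ← card_toLeft_add_card_toRight (u := U.toRight)]
  simp only [ksp1, sum_add_distrib, ← mul_sum, sum_const, Int.nsmul_eq_mul, mul_one,
    Nat.cast_add]
  ring

lemma sum_ksp2 (U : Finset (KSJob2 m a)) :
    ∑ x ∈ U, ksp2 m k a x =
      -(m * ∑ j ∈ U.toLeft, a j) + #U.toRight * (m * ((∑ j, a j) + 3 * k * ∑ j, |a j|)) := by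
  rw [sum_sum_eq_sum_toLeft_add_sum_toRight]
  simp [ksp2, mul_sum]

lemma sum_univ_ksp1_sub_sum_univ_ksp2 (hk : 1 ≤ k) :
    ∑ x, ksp1 m k a x - ∑ x, ksp2 m k a x = Fintype.card {j // 0 ≤ a j} + 1 := by
  rw [sum_ksp1, sum_ksp2, ← sum_subtype_nonneg_add_sum_subtype_neg a]
  simp only [toLeft_univ, card_univ, toRight_univ, Fintype.card_sum, Fintype.card_fin,
    Fintype.card_unique, Nat.sub_add_cancel hk, Nat.cast_one, one_mul]
  ring

variable (m k a) in
def swapGain (U₁ : Finset (KSJob1 m k a)) (U₂ : Finset (KSJob2 m a)) : ℤ :=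
  ∑ x ∈ U₁, ksp1 m k a x - ∑ x ∈ U₂, ksp2 m k a x

variable (m k a) in
def IsImprovingSwap (U₁ : Finset (KSJob1 m k a)) (U₂ : Finset (KSJob2 m a)) : Prop :=
  #U₁ + #U₂ = k ∧ 0 < swapGain m k a U₁ U₂ ∧
    swapGain m k a U₁ U₂ < ∑ x, ksp1 m k a x - ∑ x, ksp2 m k a x

lemma swapGain_eq (U₁ : Finset (KSJob1 m k a)) (U₂ : Finset (KSJob2 m a)) :
    swapGain m k a U₁ U₂ = m * (∑ j ∈ U₁.toLeft, a j + ∑ j ∈ U₂.toLeft, a j) + #U₁.toLeft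
      + 3 * m * (∑ j, |a j|) * #U₁.toRight + #U₁.toRight.toRight
      - #U₂.toRight * (m * ((∑ j, a j) + 3 * k * ∑ j, |a j|)) := by
  rw [swapGain, sum_ksp1, sum_ksp2]
  ring

namespace IsImprovingSwap

variable {U₁ : Finset (KSJob1 m k a)} {U₂ : Finset (KSJob2 m a)}

lemma card_toLeft_add_card_toRight (h : IsImprovingSwap m k a U₁ U₂) :
    #U₁.toLeft + #U₁.toRight + (#U₂.toLeft + #U₂.toRight) = k := by
  simpa only [Finset.card_toLeft_add_card_toRight] using h.1

theorem snd_toRight_eq_empty (h : IsImprovingSwap m k a U₁ U₂) (hT : 0 ≤ ∑ j, a j)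
    (hA : 0 < ∑ j, |a j|) : U₂.toRight = ∅ := by
  by_contra hne
  have hb : #U₂.toRight = 1 :=
    le_antisymm (card_le_univ _) (card_pos.2 (nonempty_iff_ne_empty.2 hne))
  have hcard : (#U₁.toLeft : ℤ) + #U₁.toRight + 1 ≤ k := by
    have := h.card_toLeft_add_card_toRight
    omega
  have hx := sum_subtype_nonneg_le_sum_abs a U₁.toLeft
  have hy : ∑ j ∈ U₂.toLeft, a j ≤ 0 := sum_nonpos fun j _ => j.2.le
  have he : #U₁.toRight.toRight ≤ 1 := card_le_univ _
  have hm := one_le_of_sum_abs_pos hA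
  have hG := swapGain_eq U₁ U₂
  rw [hb, Nat.cast_one, one_mul] at hG
  set A := ∑ j, |a j|
  have hmA : 1 ≤ (m : ℤ) * A := one_le_mul_of_one_le_of_one_le hm hA
  have : swapGain m k a U₁ U₂ ≤ 1 - 2 * m * A := by
    nlinarith [mul_le_mul_of_nonneg_left hx (by positivity : (0 : ℤ) ≤ m),
      mul_le_mul_of_nonneg_left hcard (by positivity : (0 : ℤ) ≤ 3 * m * A),
      mul_le_mul_of_nonneg_right (by linarith : 1 ≤ 3 * (m : ℤ) * A)
        (Nat.cast_nonneg (α := ℤ) #U₁.toLeft),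
      mul_nonpos_of_nonneg_of_nonpos (by positivity : (0 : ℤ) ≤ m) hy,
      mul_nonneg (by positivity : (0 : ℤ) ≤ m) hT]
  linarith [h.2.1]

theorem fst_toRight_eq_empty (h : IsImprovingSwap m k a U₁ U₂) (hk : 1 ≤ k)
    (hT : 0 ≤ ∑ j, a j) (hA : 0 < ∑ j, |a j|) : U₁.toRight = ∅ := by
  by_contra hne
  have hc : (1 : ℤ) ≤ #U₁.toRight := by
    exact_mod_cast card_pos.2 (nonempty_iff_ne_empty.2 hne)
  have hx : 0 ≤ ∑ j ∈ U₁.toLeft, a j := sum_nonneg fun j _ => j.2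
  have hy := neg_sum_abs_le_sum_subtype_neg a U₂.toLeft
  have hN : (Fintype.card {j // 0 ≤ a j} : ℤ) ≤ m := by
    exact_mod_cast (Fintype.card_subtype_le _).trans_eq (Fintype.card_fin m)
  have hm := one_le_of_sum_abs_pos hA
  have hG := swapGain_eq U₁ U₂
  rw [h.snd_toRight_eq_empty hT hA, card_empty, Nat.cast_zero, zero_mul, sub_zero] at hG
  have hlt := h.2.2
  rw [sum_univ_ksp1_sub_sum_univ_ksp2 hk] at hlt
  set A := ∑ j, |a j|
  have hmA : 1 ≤ (m : ℤ) * A := one_le_mul_of_one_le_of_one_le hm hA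
  have : 2 * m * A ≤ swapGain m k a U₁ U₂ := by
    nlinarith [mul_le_mul_of_nonneg_left hy (by positivity : (0 : ℤ) ≤ m),
      mul_le_mul_of_nonneg_left hc (by positivity : (0 : ℤ) ≤ 3 * m * A)]
  nlinarith

theorem sum_toLeft_add_sum_toLeft_eq_zero (h : IsImprovingSwap m k a U₁ U₂) (hk : 1 ≤ k)
    (hT : 0 ≤ ∑ j, a j) (hA : 0 < ∑ j, |a j|) :
    ∑ j ∈ U₁.toLeft, a j + ∑ j ∈ U₂.toLeft, a j = 0 := by
  have hfst := h.fst_toRight_eq_empty hk hT hA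
  have he : U₁.toRight.toRight = ∅ := by rw [hfst]; rfl
  have hG := swapGain_eq U₁ U₂
  rw [h.snd_toRight_eq_empty hT hA, he, hfst] at hG
  simp only [card_empty, Nat.cast_zero, mul_zero, zero_mul, add_zero, sub_zero] at hG
  have hlt := h.2.2
  rw [sum_univ_ksp1_sub_sum_univ_ksp2 hk] at hlt
  have hv : #U₁.toLeft ≤ Fintype.card {j // 0 ≤ a j} := card_le_univ _
  have hN : Fintype.card {j // 0 ≤ a j} ≤ m :=
    (Fintype.card_subtype_le _).trans_eq (Fintype.card_fin m)
  set σ := ∑ j ∈ U₁.toLeft, a j + ∑ j ∈ U₂.toLeft, a j with hσ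
  rcases lt_trichotomy σ 0 with hneg | hzero | hpos
  · nlinarith [h.2.1, mul_le_mul_of_nonneg_left (by omega : σ ≤ -1) (Nat.cast_nonneg (α := ℤ) m)]
  · exact hzero
  · have hv0 : U₁.toLeft = ∅ := by
      rw [← card_eq_zero]
      nlinarith [mul_le_mul_of_nonneg_left (by omega : 1 ≤ σ) (Nat.cast_nonneg (α := ℤ) m)]
    have hy : ∑ j ∈ U₂.toLeft, a j ≤ 0 := sum_nonpos fun j _ => j.2.le
    rw [hσ, hv0, sum_empty] at hpos
    linarith

theorem exists_card_eq_sum_eq_zero (h : IsImprovingSwap m k a U₁ U₂) (hk : 1 ≤ k)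
    (hkm : k ≤ m) (hT : 0 ≤ ∑ j, a j) :
    ∃ Γ : Finset (Fin m), #Γ = k ∧ ∑ j ∈ Γ, a j = 0 := by
  rcases (sum_nonneg fun j _ => abs_nonneg (a j)).eq_or_lt with hA | hA
  · obtain ⟨Γ, -, hΓ⟩ := exists_subset_card_eq (s := (univ : Finset (Fin m))) (by simpa using hkm)
    refine ⟨Γ, hΓ, sum_eq_zero fun j _ => abs_eq_zero.1 ?_⟩
    exact (sum_eq_zero_iff_of_nonneg fun _ _ => abs_nonneg _).1 hA.symm j (mem_univ j)
  · obtain ⟨Γ, hcard, hsum⟩ := exists_finset_of_subtype_nonneg_neg a U₁.toLeft U₂.toLeft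
    refine ⟨Γ, ?_, hsum.trans (h.sum_toLeft_add_sum_toLeft_eq_zero hk hT hA)⟩
    have := h.card_toLeft_add_card_toRight
    rw [h.fst_toRight_eq_empty hk hT hA, h.snd_toRight_eq_empty hT hA] at this
    simpa [hcard] using this

end IsImprovingSwap

theorem isImprovingSwap_of_card_eq_sum_eq_zero (hk : 1 ≤ k) {Γ : Finset (Fin m)}
    (hΓ : #Γ = k) (hsum : ∑ j ∈ Γ, a j = 0) :
    IsImprovingSwap m k a ((Γ.subtype (0 ≤ a ·)).disjSum ∅)
      ((Γ.subtype (a · < 0)).disjSum ∅) := by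
  have hsplit := sum_filter_add_sum_filter_not Γ (0 ≤ a ·) a
  have hcard := card_filter_add_card_filter_not (s := Γ) (0 ≤ a ·)
  simp only [not_le] at hsplit hcard
  obtain ⟨j, hjΓ, hj⟩ :=
    exists_le_of_sum_le (s := Γ) (f := 0) (g := a) (card_pos.1 (by omega)) (by simp [hsum])
  refine ⟨by simpa [card_subtype, hΓ] using hcard, ?_⟩
  have hG : swapGain m k a ((Γ.subtype (0 ≤ a ·)).disjSum ∅) ((Γ.subtype (a · < 0)).disjSum ∅)
      = #(Γ.filter (0 ≤ a ·)) := by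
    rw [swapGain_eq, toLeft_disjSum, toLeft_disjSum, toRight_disjSum, toRight_disjSum]
    simp [sum_subtype_eq_sum_filter, card_subtype, hsplit, hsum,
      show (∅ : Finset (Fin (k - 1) ⊕ Unit)).toRight = ∅ from rfl]
  rw [hG, sum_univ_ksp1_sub_sum_univ_ksp2 hk, Fintype.card_subtype]
  have hpos : 0 < #(Γ.filter (0 ≤ a ·)) := card_pos.2 ⟨j, mem_filter.2 ⟨hjΓ, hj⟩⟩
  have hle := card_le_card (filter_subset_filter (0 ≤ a ·) (subset_univ Γ))
  constructor <;> omega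

/-- Reduction from k-sum to finding an improving k-swap: in the constructed
two-machine instance, there is an improving swap of `k` jobs (sets `U₁` on the critical
machine 1 and `U₂` on machine 2 with `|U₁| + |U₂| = k` and
`0 < p(U₁) - p(U₂) < L₁ - L₂`) iff some `k` distinct numbers among the `a j` sum to 0. -/
theorem ksum_reduction (m k : ℕ) (hk : 2 ≤ k) (hkm : k ≤ m)
    (a : Fin m → ℤ) (ha : 0 ≤ ∑ j, a j) :
    (∃ (U₁ : Finset (KSJob1 m k a)) (U₂ : Finset (KSJob2 m a)),
        U₁.card + U₂.card = k ∧
        0 < (∑ x ∈ U₁, ksp1 m k a x) - (∑ x ∈ U₂, ksp2 m k a x) ∧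
        (∑ x ∈ U₁, ksp1 m k a x) - (∑ x ∈ U₂, ksp2 m k a x) <
          (∑ x, ksp1 m k a x) - (∑ x, ksp2 m k a x)) ↔
      ∃ Γ : Finset (Fin m), Γ.card = k ∧ ∑ j ∈ Γ, a j = 0 := by
  have hk1 : 1 ≤ k := by omega
  constructor
  · rintro ⟨U₁, U₂, h⟩
    exact IsImprovingSwap.exists_card_eq_sum_eq_zero h hk1 hkm ha
  · rintro ⟨Γ, hΓ, hsum⟩
    exact ⟨_, _, isImprovingSwap_of_card_eq_sum_eq_zero hk1 hΓ hsum⟩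
end

section
/- Let m and k be integers with 2 ≤ k ≤ m, and let a : Fin m → ℤ satisfy Σ_j a j ≥ 0 and Σ_j |a j| ≥ 1. Set A = Σ_j |a j| and T = Σ_j a j, and construct a two-machine instance as follows. Machine 1 contains: for each index j with a j ≥ 0, one job of processing time m·(a j) + 1 (a 'k-sum job' of machine 1); k − 1 jobs each of processing time 3·m·A; and one job of processing time 3·m·A + 1. Machine 2 contains: for each index j with a j < 0, one job of processing time −m·(a j) (a 'k-sum job' of machine 2); and one job of processing time m·(T + 3·k·A). Let L₁ and L₂ denote the total processing time of the jobs on machine 1 and machine 2, respectively. If U₁ is a set of jobs on machine 1 and U₂ is a set of jobs on machine 2 with |U₁| + |U₂| = k and 0 < p(U₁) − p(U₂) < L₁ − L₂ (where p(U) denotes the total processing time of the jobs in U), then every job in U₁ ∪ U₂ is a k-sum job; i.e., U₁ contains none of the k − 1 jobs of processing time 3·m·A nor the job of processing time 3·m·A + 1, and U₂ does not contain the job of processing time m·(T + 3·k·A). -/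
lemma ks_sum1 (m k : ℕ) (hk : 2 ≤ k) (a : Fin m → ℤ) :
    ∑ x, ksp1 m k a x
      = m * (∑ j : {j : Fin m // 0 ≤ a j}, a j.1)
        + Fintype.card {j : Fin m // 0 ≤ a j} + (3 * m * (∑ j, |a j|) * k + 1) := by
  rw [Fintype.sum_sum_type, Fintype.sum_sum_type]
  simp only [ksp1]
  rw [Finset.sum_add_distrib, Finset.sum_const, Finset.sum_const, Finset.sum_const]
  simp only [Finset.card_univ, Fintype.card_fin, Fintype.card_unit, smul_eq_mul, one_smul,
    nsmul_eq_mul, mul_one]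
  rw [← Finset.mul_sum]
  have hkc : ((k - 1 : ℕ) : ℤ) = (k : ℤ) - 1 := by
    have : 1 ≤ k := by omega
    push_cast [this]; ring
  rw [hkc]; ring

lemma ks_sum2 (m k : ℕ) (a : Fin m → ℤ) :
    ∑ x, ksp2 m k a x
      = m * (∑ j : {j : Fin m // a j < 0}, -(a j.1))
        + m * ((∑ j, a j) + 3 * k * ∑ j, |a j|) := by
  rw [Fintype.sum_sum_type]
  simp only [ksp2]
  rw [Finset.sum_const]
  simp only [Finset.card_univ, Fintype.card_unit, one_smul]
  have h : ∑ x : {j : Fin m // a j < 0}, -((m:ℤ) * a x.1)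
      = ∑ x : {j : Fin m // a j < 0}, (m:ℤ) * -(a x.1) := by
    apply Finset.sum_congr rfl; intros; ring
  rw [h, ← Finset.mul_sum]

lemma ks_PN_T (m : ℕ) (a : Fin m → ℤ) :
    (∑ j : {j : Fin m // 0 ≤ a j}, a j.1) - (∑ j : {j : Fin m // a j < 0}, -(a j.1))
      = ∑ j, a j := by
  classical
  have hsubP : ∑ j ∈ Finset.univ.filter (fun j => 0 ≤ a j), a j
      = ∑ j : {j : Fin m // 0 ≤ a j}, a j.1 :=
    Finset.sum_subtype _ (fun x => by simp) _
  have hsubN : ∑ j ∈ Finset.univ.filter (fun j => a j < 0), a j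
      = ∑ j : {j : Fin m // a j < 0}, a j.1 :=
    Finset.sum_subtype _ (fun x => by simp) _
  have hfilter_eq : Finset.univ.filter (fun j : Fin m => ¬ 0 ≤ a j)
      = Finset.univ.filter (fun j : Fin m => a j < 0) := by
    apply Finset.filter_congr; intro j _; simp [not_le]
  have hsplit := Finset.sum_filter_add_sum_filter_not Finset.univ (fun j : Fin m => 0 ≤ a j) a
  rw [hfilter_eq, hsubP, hsubN] at hsplit
  have hneg : ∑ j : {j : Fin m // a j < 0}, -(a j.1)
      = -∑ j : {j : Fin m // a j < 0}, a j.1 := by simp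
  rw [hneg]; linarith

lemma ks_PN_A (m : ℕ) (a : Fin m → ℤ) :
    (∑ j : {j : Fin m // 0 ≤ a j}, a j.1) + (∑ j : {j : Fin m // a j < 0}, -(a j.1))
      = ∑ j, |a j| := by
  classical
  have hsubP : ∑ j ∈ Finset.univ.filter (fun j => 0 ≤ a j), a j
      = ∑ j : {j : Fin m // 0 ≤ a j}, a j.1 :=
    Finset.sum_subtype _ (fun x => by simp) _
  have hsubN : ∑ j ∈ Finset.univ.filter (fun j => a j < 0), -(a j)
      = ∑ j : {j : Fin m // a j < 0}, -(a j.1) :=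
    Finset.sum_subtype _ (fun x => by simp) _
  have hfilter_eq : Finset.univ.filter (fun j : Fin m => ¬ 0 ≤ a j)
      = Finset.univ.filter (fun j : Fin m => a j < 0) := by
    apply Finset.filter_congr; intro j _; simp [not_le]
  have hsplit := Finset.sum_filter_add_sum_filter_not Finset.univ (fun j : Fin m => 0 ≤ a j)
    (fun j => |a j|)
  rw [hfilter_eq] at hsplit
  have h1 : ∑ j ∈ Finset.univ.filter (fun j : Fin m => 0 ≤ a j), |a j|
      = ∑ j ∈ Finset.univ.filter (fun j : Fin m => 0 ≤ a j), a j :=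
    Finset.sum_congr rfl fun j hj => abs_of_nonneg (Finset.mem_filter.1 hj).2
  have h2 : ∑ j ∈ Finset.univ.filter (fun j : Fin m => a j < 0), |a j|
      = ∑ j ∈ Finset.univ.filter (fun j : Fin m => a j < 0), -(a j) :=
    Finset.sum_congr rfl fun j hj => abs_of_neg (Finset.mem_filter.1 hj).2
  rw [h1, h2, hsubP, hsubN] at hsplit
  linarith

set_option maxHeartbeats 1000000 in
/-- In the k-sum reduction instance (with `∑ |a j| ≥ 1`), any improving k-swap
`(U₁, U₂)` uses only k-sum jobs: `U₁` contains none of the filler jobs and none of the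
extra job of machine 1, and `U₂` does not contain the big job of machine 2. -/
theorem ksum_reduction_only_ksum_jobs (m k : ℕ) (hk : 2 ≤ k) (hkm : k ≤ m)
    (a : Fin m → ℤ) (ha : 0 ≤ ∑ j, a j) (ha1 : 1 ≤ ∑ j, |a j|)
    (U₁ : Finset (KSJob1 m k a)) (U₂ : Finset (KSJob2 m a))
    (hcard : U₁.card + U₂.card = k)
    (hpos : 0 < (∑ x ∈ U₁, ksp1 m k a x) - (∑ x ∈ U₂, ksp2 m k a x))
    (hlt : (∑ x ∈ U₁, ksp1 m k a x) - (∑ x ∈ U₂, ksp2 m k a x) <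
      (∑ x, ksp1 m k a x) - (∑ x, ksp2 m k a x)) :
    (∀ x ∈ U₁, ∃ j : {j : Fin m // 0 ≤ a j}, x = Sum.inl j) ∧
    (∀ x ∈ U₂, ∃ j : {j : Fin m // a j < 0}, x = Sum.inl j) := by
  classical
  have hm2 : 2 ≤ m := hk.trans hkm
  have hmZ : (2 : ℤ) ≤ m := by exact_mod_cast hm2
  have hkZ : (2 : ℤ) ≤ k := by exact_mod_cast hk
  have hkmZ : (k : ℤ) ≤ m := by exact_mod_cast hkm
  have hTA : (∑ j, a j) ≤ ∑ j, |a j| := Finset.sum_le_sum fun j _ => le_abs_self _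
  have hPNT := ks_PN_T m a
  have hPNA := ks_PN_A m a
  have hN0 : 0 ≤ ∑ j : {j : Fin m // a j < 0}, -(a j.1) :=
    Finset.sum_nonneg fun j _ => by have := j.2; linarith
  have hP0 : 0 ≤ ∑ j : {j : Fin m // 0 ≤ a j}, a j.1 :=
    Finset.sum_nonneg fun j _ => j.2
  have hc1m : (Fintype.card {j : Fin m // 0 ≤ a j} : ℤ) ≤ m := by
    have := Fintype.card_subtype_le (fun j : Fin m => 0 ≤ a j)
    simp only [Fintype.card_fin] at this
    exact_mod_cast this
  have hLdiff : (∑ x, ksp1 m k a x) - (∑ x, ksp2 m k a x)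
      = (Fintype.card {j : Fin m // 0 ≤ a j} : ℤ) + 1 := by
    rw [ks_sum1 m k hk a, ks_sum2 m k a]
    nlinarith [hPNT]
  have hksp1_nonneg : ∀ x : KSJob1 m k a, 0 ≤ ksp1 m k a x := by
    rintro (j | (f | u)) <;> simp only [ksp1]
    · have := j.2; positivity
    · positivity
    · positivity
  have habsA : ∀ j : Fin m, |a j| ≤ ∑ i, |a i| :=
    fun j => Finset.single_le_sum (f := fun i => |a i|) (fun i _ => abs_nonneg _)
      (Finset.mem_univ j)
  have hksp1_le : ∀ x : KSJob1 m k a, ksp1 m k a x ≤ 3 * m * (∑ j, |a j|) + 1 := by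
    rintro (j | (f | u)) <;> simp only [ksp1]
    · have h1 : a j.1 ≤ ∑ i, |a i| := le_trans (le_abs_self _) (habsA j.1)
      nlinarith
    · linarith
    · linarith
  have hksp2_nonneg : ∀ x : KSJob2 m a, 0 ≤ ksp2 m k a x := by
    rintro (j | u) <;> simp only [ksp2]
    · have := j.2; nlinarith
    · have : (0:ℤ) ≤ (∑ j, a j) + 3 * k * ∑ j, |a j| := by positivity
      positivity
  have hbig : Sum.inr () ∉ U₂ := by
    intro hmem
    have hU2pos : 1 ≤ U₂.card := Finset.card_pos.2 ⟨_, hmem⟩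
    have hU1card : (U₁.card : ℤ) ≤ (k : ℤ) - 1 := by
      have h : U₁.card ≤ k - 1 := by omega
      have h1 : 1 ≤ k := by omega
      calc (U₁.card : ℤ) ≤ ((k - 1 : ℕ) : ℤ) := by exact_mod_cast h
        _ = (k : ℤ) - 1 := by push_cast [h1]; ring
    have hU1le : ∑ x ∈ U₁, ksp1 m k a x ≤ U₁.card * (3 * m * (∑ j, |a j|) + 1) := by
      calc ∑ x ∈ U₁, ksp1 m k a x ≤ ∑ _x ∈ U₁, (3 * m * (∑ j, |a j|) + 1) :=
            Finset.sum_le_sum fun x _ => hksp1_le x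
        _ = U₁.card * (3 * m * (∑ j, |a j|) + 1) := by rw [Finset.sum_const, nsmul_eq_mul]
    have hU2ge : (m : ℤ) * ((∑ j, a j) + 3 * k * ∑ j, |a j|) ≤ ∑ x ∈ U₂, ksp2 m k a x := by
      have := Finset.single_le_sum (f := ksp2 m k a) (fun x _ => hksp2_nonneg x) hmem
      simpa [ksp2] using this
    have hcard1nn : (0:ℤ) ≤ (U₁.card : ℤ) := by positivity
    have hfac : (0:ℤ) ≤ 3 * m * (∑ j, |a j|) + 1 := by nlinarith
    nlinarith [hpos, hU1le, hU2ge, mul_le_mul_of_nonneg_right hU1card hfac]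
  have hU2small : ∑ x ∈ U₂, ksp2 m k a x ≤ m * ∑ j, |a j| := by
    have hsub : U₂ ⊆ Finset.univ.erase (Sum.inr ()) := by
      intro x hx
      rcases x with j | u
      · simp
      · cases u; exact absurd hx hbig
    have h1 : ∑ x ∈ U₂, ksp2 m k a x ≤ ∑ x ∈ Finset.univ.erase (Sum.inr ()), ksp2 m k a x :=
      Finset.sum_le_sum_of_subset_of_nonneg hsub fun x _ _ => hksp2_nonneg x
    have h2 : ∑ x ∈ Finset.univ.erase (Sum.inr ()), ksp2 m k a x
        = (∑ x, ksp2 m k a x) - ksp2 m k a (Sum.inr ()) :=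
      Finset.sum_erase_eq_sub (Finset.mem_univ _)
    have h3 : ksp2 m k a (Sum.inr ()) = m * ((∑ j, a j) + 3 * k * ∑ j, |a j|) := rfl
    have hNA : (∑ j : {j : Fin m // a j < 0}, -(a j.1)) ≤ ∑ j, |a j| := by linarith
    calc ∑ x ∈ U₂, ksp2 m k a x
        ≤ (∑ x, ksp2 m k a x) - ksp2 m k a (Sum.inr ()) := by rw [← h2]; exact h1
      _ = m * (∑ j : {j : Fin m // a j < 0}, -(a j.1)) := by rw [ks_sum2 m k a, h3]; ring
      _ ≤ m * ∑ j, |a j| := by nlinarith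
  constructor
  · rintro (j | y) hx
    · exact ⟨j, rfl⟩
    · exfalso
      have hbigval : 3 * m * (∑ j, |a j|) ≤ ksp1 m k a (Sum.inr y) := by
        rcases y with f | u <;> simp only [ksp1] <;> linarith
      have hU1ge : 3 * m * (∑ j, |a j|) ≤ ∑ x ∈ U₁, ksp1 m k a x :=
        le_trans hbigval (Finset.single_le_sum (f := ksp1 m k a)
          (fun x _ => hksp1_nonneg x) hx)
      rw [hLdiff] at hlt
      nlinarith
  · rintro (j | u) hx
    · exact ⟨j, rfl⟩
    · cases u; exact absurd hx hbig
end

section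
/- Fix an instance with n jobs and a bijection e : Fin n ≃ Fin n such that p i < p j implies e i < e j (a ranking of the jobs by non-decreasing processing time), and define the potential Φ σ = Σ_{j : σ j = false} ((e j : ℕ) + 1). If σ' is an improving 2-swap neighbor of σ and L false σ ≥ L true σ and L false σ' ≥ L true σ', then Φ σ' < Φ σ. -/
/-- Load of machine `b` in schedule `σ` for an instance with processing times `p`. -/
def load {n : ℕ} (p : Fin n → ℝ) (b : Bool) (σ : Fin n → Bool) : ℝ :=
  ∑ j ∈ Finset.univ.filter (fun j => σ j = b), p j

/-- The potential: sum of the ranks (`e j + 1`, ranks being 1-based) of the jobs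
scheduled on machine `false`. -/
def potential {n : ℕ} (e : Fin n ≃ Fin n) (σ : Fin n → Bool) : ℕ :=
  ∑ j ∈ Finset.univ.filter (fun j => σ j = false), ((e j : ℕ) + 1)

lemma bool_flip {x y : Bool} (h : x ≠ y) : y = !x := by
  cases x <;> cases y <;> simp_all

lemma diff_sum {n : ℕ} {M : Type*} [AddCommGroup M] (σ σ' : Fin n → Bool) (w : Fin n → M) :
    (∑ j ∈ Finset.univ.filter (fun j => σ' j = false), w j) -
      (∑ j ∈ Finset.univ.filter (fun j => σ j = false), w j) =
    ∑ j ∈ Finset.univ.filter (fun j => σ j ≠ σ' j),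
      ((if σ' j = false then w j else 0) - (if σ j = false then w j else 0)) := by
  rw [Finset.sum_filter, Finset.sum_filter, ← Finset.sum_sub_distrib, Finset.sum_filter]
  apply Finset.sum_congr rfl
  intro j _
  by_cases h : σ j = σ' j <;> simp [h]

/-- If `σ'` is an improving 2-swap neighbor of `σ` and machine `false` is critical in
both `σ` and `σ'`, then the potential `Φ` (the sum of the ranks of the jobs on machine
`false`) strictly decreases. -/
theorem potential_decreases (n : ℕ) (p : Fin n → ℝ) (hp : ∀ j, 0 ≤ p j)
    (e : Fin n ≃ Fin n) (he : ∀ i j : Fin n, p i < p j → e i < e j)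
    (σ σ' : Fin n → Bool)
    (hdiff : (Finset.univ.filter (fun j => σ j ≠ σ' j)).card ≤ 2)
    (himp : max (load p false σ') (load p true σ') <
      max (load p false σ) (load p true σ))
    (hcrit : load p true σ ≤ load p false σ)
    (hcrit' : load p true σ' ≤ load p false σ') :
    potential e σ' < potential e σ := by
  have h1 : load p false σ' < load p false σ := by
    rwa [max_eq_left hcrit', max_eq_left hcrit] at himp
  set D := Finset.univ.filter (fun j => σ j ≠ σ' j) with hD
  have hload := diff_sum σ σ' p
  have hpot := diff_sum σ σ' (fun j => ((e j : ℤ) + 1))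
  rw [← hD] at hload hpot
  have hLdef : load p false σ' - load p false σ =
      ∑ j ∈ D, ((if σ' j = false then p j else 0) - (if σ j = false then p j else 0)) := by
    simpa [load] using hload
  suffices h : (potential e σ' : ℤ) < (potential e σ) by exact_mod_cast h
  have hPdef : (potential e σ' : ℤ) - (potential e σ) =
      ∑ j ∈ D, ((if σ' j = false then ((e j : ℤ) + 1) else 0)
        - (if σ j = false then ((e j : ℤ) + 1) else 0)) := by
    simp only [potential]
    push_cast
    exact hpot
  -- case on |D|
  interval_cases hc : D.card
  · -- D empty : loads equal, contradiction
    rw [Finset.card_eq_zero] at hc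
    rw [hc, Finset.sum_empty] at hLdef
    linarith
  · rw [Finset.card_eq_one] at hc
    obtain ⟨a, hDa⟩ := hc
    rw [hDa] at hLdef hPdef
    have haD : a ∈ D := by rw [hDa]; exact Finset.mem_singleton_self a
    rw [hD, Finset.mem_filter] at haD
    have ha : σ a ≠ σ' a := haD.2
    have hsa' := bool_flip ha
    rw [Finset.sum_singleton] at hLdef hPdef
    rcases Bool.eq_false_or_eq_true (σ a) with hsa | hsa <;>
      rw [hsa] at hsa' <;> simp only [Bool.not_true, Bool.not_false] at hsa'
    · -- true → false : load increases, contradiction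
      rw [hsa, hsa'] at hLdef
      simp at hLdef
      have := hp a
      linarith
    · -- false → true : potential drops
      rw [hsa, hsa'] at hPdef
      simp at hPdef
      have : (0:ℤ) ≤ (e a : ℤ) := Int.natCast_nonneg _
      linarith
  · rw [Finset.card_eq_two] at hc
    obtain ⟨a, b, hab, hDab⟩ := hc
    rw [hDab] at hLdef hPdef
    have haD : a ∈ D := by rw [hDab]; simp
    have hbD : b ∈ D := by rw [hDab]; simp
    rw [hD, Finset.mem_filter] at haD hbD
    have ha : σ a ≠ σ' a := haD.2
    have hb : σ b ≠ σ' b := hbD.2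
    have hsa' := bool_flip ha
    have hsb' := bool_flip hb
    rw [Finset.sum_pair hab] at hLdef hPdef
    rcases Bool.eq_false_or_eq_true (σ a) with hsa | hsa <;>
        rcases Bool.eq_false_or_eq_true (σ b) with hsb | hsb <;>
        rw [hsa] at hsa' <;> rw [hsb] at hsb' <;>
        simp only [Bool.not_true, Bool.not_false] at hsa' hsb'
    · -- both true → false : load increases, contradiction
      rw [hsa, hsa', hsb, hsb'] at hLdef
      simp at hLdef
      have := hp a; have := hp b
      linarith
    · -- a : true→false, b : false→true
      rw [hsa, hsa', hsb, hsb'] at hPdef hLdef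
      simp at hPdef hLdef
      have hpba : p a < p b := by linarith
      have heba : e a < e b := he a b hpba
      have : ((e a : ℕ) : ℤ) < ((e b : ℕ) : ℤ) := by exact_mod_cast heba
      linarith
    · -- a : false→true, b : true→false
      rw [hsa, hsa', hsb, hsb'] at hPdef hLdef
      simp at hPdef hLdef
      have hpba : p b < p a := by linarith
      have heba : e b < e a := he b a hpba
      have : ((e b : ℕ) : ℤ) < ((e a : ℕ) : ℤ) := by exact_mod_cast heba
      linarith
    · -- both false → true : potential drops
      rw [hsa, hsa', hsb, hsb'] at hPdef
      simp at hPdef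
      have h2 : (0:ℤ) ≤ (e a : ℤ) := Int.natCast_nonneg _
      have h3 : (0:ℤ) ≤ (e b : ℤ) := Int.natCast_nonneg _
      linarith
end

section
/- Let σ₀, σ₁, …, σ_T be a sequence of schedules for an instance with n jobs such that for every t < T, σ_{t+1} is an improving 2-swap neighbor of σ_t, and such that machine false remains critical throughout, i.e., L false σ_t ≥ L true σ_t for all t ≤ T. Then T ≤ n². In other words, a critical machine remains critical for at most O(n²) iterations of improving 2-swaps. -/
/-- Makespan of a schedule. -/
def Cmax {n : ℕ} (p : Fin n → ℝ) (σ : Fin n → Bool) : ℝ :=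
  max (load p false σ) (load p true σ)

/-- Sum identity for a single swap step: new sum + (jobs leaving false) = old sum + (jobs entering false). -/
lemma swap_sum_identity {n : ℕ} (σ σ' : Fin n → Bool) {M : Type*} [AddCommMonoid M]
    (f : Fin n → M) :
    ((∑ j ∈ Finset.univ.filter (fun j => σ' j = false), f j) +
      ∑ j ∈ Finset.univ.filter (fun j => σ j = false ∧ σ' j = true), f j) =
    ((∑ j ∈ Finset.univ.filter (fun j => σ j = false), f j) +
      ∑ j ∈ Finset.univ.filter (fun j => σ j = true ∧ σ' j = false), f j) := by
  classical
  simp only [Finset.sum_filter, ← Finset.sum_add_distrib]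
  apply Finset.sum_congr rfl
  intro j _
  cases h1 : σ j <;> cases h2 : σ' j <;> simp [h1, h2]

/-- A critical machine remains critical for at most `n²` iterations: if
`σ₀, …, σ_T` is a sequence of schedules in which each `σ_{t+1}` is an improving
2-swap neighbor of `σ_t` and machine `false` is critical throughout, then `T ≤ n²`. -/
theorem critical_machine_stays_critical (n : ℕ) (p : Fin n → ℝ) (hp : ∀ j, 0 ≤ p j)
    (T : ℕ) (σ : ℕ → Fin n → Bool)
    (hstep : ∀ t < T,
      (Finset.univ.filter (fun j => σ t j ≠ σ (t + 1) j)).card ≤ 2 ∧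
      Cmax p (σ (t + 1)) < Cmax p (σ t))
    (hcrit : ∀ t ≤ T, load p true (σ t) ≤ load p false (σ t)) :
    T ≤ n ^ 2 := by
  classical
  -- rank of a job
  set r : Fin n → ℕ := fun j =>
    (Finset.univ.filter (fun k => p k < p j ∨ (p k = p j ∧ k < j))).card with hr
  have hrlt : ∀ j k : Fin n, p j < p k → r j < r k := by
    intro j k hjk
    apply Finset.card_lt_card
    constructor
    · intro i hi
      simp only [Finset.mem_filter, Finset.mem_univ, true_and] at hi ⊢
      rcases hi with h | ⟨h, _⟩
      · exact Or.inl (h.trans hjk)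
      · exact Or.inl (h ▸ hjk)
    · intro hsub
      have : j ∈ Finset.univ.filter (fun i => p i < p k ∨ (p i = p k ∧ i < k)) := by
        simp [hjk]
      have := hsub this
      simp only [Finset.mem_filter, Finset.mem_univ, true_and] at this
      rcases this with h | h
      · exact absurd h (lt_irrefl _)
      · exact absurd h (lt_irrefl _)
  have hrn : ∀ j : Fin n, r j + 1 ≤ n := by
    intro j
    have : r j < n := by
      have : (Finset.univ.filter (fun k => p k < p j ∨ (p k = p j ∧ k < j))) ⊂ Finset.univ := by
        refine Finset.ssubset_univ_iff.mpr ?_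
        intro h
        have : j ∈ Finset.univ.filter (fun k => p k < p j ∨ (p k = p j ∧ k < j)) := by
          rw [h]; exact Finset.mem_univ j
        simp at this
      simpa [hr] using Finset.card_lt_card this
    omega
  -- potential
  set Φ : ℕ → ℕ :=
    fun t => ∑ j ∈ Finset.univ.filter (fun j => σ t j = false), (r j + 1) with hΦ
  have hΦle : ∀ t, Φ t ≤ n ^ 2 := by
    intro t
    calc Φ t ≤ ∑ j : Fin n, (r j + 1) :=
          Finset.sum_le_sum_of_subset (Finset.filter_subset _ _)
      _ ≤ ∑ _j : Fin n, n := Finset.sum_le_sum (fun j _ => hrn j)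
      _ = n * n := by simp [Finset.sum_const, mul_comm]
      _ = n ^ 2 := (sq n).symm
  have hdec : ∀ t < T, Φ (t + 1) < Φ t := by
    intro t ht
    obtain ⟨hcard, hCmax⟩ := hstep t ht
    set Out := Finset.univ.filter (fun j => σ t j = false ∧ σ (t + 1) j = true) with hOut
    set Inn := Finset.univ.filter (fun j => σ t j = true ∧ σ (t + 1) j = false) with hInn
    -- load on machine false strictly decreases
    have hload : load p false (σ (t + 1)) < load p false (σ t) := by
      have h1 : Cmax p (σ t) = load p false (σ t) :=
        max_eq_left (hcrit t (le_of_lt ht))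
      have h2 : load p false (σ (t + 1)) ≤ Cmax p (σ (t + 1)) := le_max_left _ _
      calc load p false (σ (t + 1)) ≤ Cmax p (σ (t + 1)) := h2
        _ < Cmax p (σ t) := hCmax
        _ = load p false (σ t) := h1
    have hpsum : (∑ j ∈ Inn, p j) < ∑ j ∈ Out, p j := by
      have hid := swap_sum_identity (σ t) (σ (t + 1)) p
      have : load p false (σ (t + 1)) + ∑ j ∈ Out, p j
          = load p false (σ t) + ∑ j ∈ Inn, p j := hid
      linarith
    -- cardinalities
    have hdisj : Disjoint Out Inn := by
      rw [Finset.disjoint_left]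
      intro a ha hb
      simp only [hOut, hInn, Finset.mem_filter] at ha hb
      rw [ha.2.1] at hb
      exact absurd hb.2.1 (by simp)
    have hsub : Out ∪ Inn ⊆ Finset.univ.filter (fun j => σ t j ≠ σ (t + 1) j) := by
      intro a ha
      simp only [Finset.mem_union, hOut, hInn, Finset.mem_filter, Finset.mem_univ,
        true_and, ne_eq] at ha ⊢
      rcases ha with ⟨h1, h2⟩ | ⟨h1, h2⟩ <;> simp [h1, h2]
    have hcard2 : Out.card + Inn.card ≤ 2 := by
      have h := Finset.card_le_card hsub
      rw [Finset.card_union_of_disjoint hdisj] at h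
      exact le_trans h hcard
    -- Out is nonempty
    have hOutne : Out.Nonempty := by
      rcases Finset.eq_empty_or_nonempty Out with h | h
      · exfalso
        rw [h, Finset.sum_empty] at hpsum
        have : (0:ℝ) ≤ ∑ j ∈ Inn, p j := Finset.sum_nonneg (fun j _ => hp j)
        linarith
      · exact h
    -- key: weighted rank sum over Inn < over Out
    have hwsum : (∑ j ∈ Inn, (r j + 1)) < ∑ j ∈ Out, (r j + 1) := by
      rcases Finset.eq_empty_or_nonempty Inn with hI | hI
      · rw [hI, Finset.sum_empty]
        exact Finset.sum_pos (fun j _ => Nat.succ_pos _) hOutne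
      · -- both nonempty : each is a singleton
        have h1 : 1 ≤ Out.card := Finset.card_pos.mpr hOutne
        have h2 : 1 ≤ Inn.card := Finset.card_pos.mpr hI
        have hO1 : Out.card = 1 := by omega
        have hI1 : Inn.card = 1 := by omega
        obtain ⟨k, hk⟩ := Finset.card_eq_one.mp hO1
        obtain ⟨j, hj⟩ := Finset.card_eq_one.mp hI1
        rw [hk, hj] at hpsum ⊢
        simp only [Finset.sum_singleton] at hpsum ⊢
        have := hrlt j k hpsum
        omega
    -- conclude
    have hid := swap_sum_identity (σ t) (σ (t + 1)) (fun j => r j + 1)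
    have hid' : Φ (t + 1) + ∑ j ∈ Out, (r j + 1) = Φ t + ∑ j ∈ Inn, (r j + 1) := hid
    omega
  -- descending ℕ-valued potential bounds T
  have hmain : ∀ t ≤ T, Φ t + t ≤ Φ 0 := by
    intro t
    induction t with
    | zero => intro _; simp
    | succ s ih =>
      intro hs
      have h1 := hdec s (by omega)
      have h2 := ih (by omega)
      omega
  have := hmain T le_rfl
  have := hΦle 0
  omega
end

section
/- Let σ and σ' be schedules of the same instance of P2||Cmax such that L false σ > L true σ, L true σ' > L false σ' (the critical machine changes), and Cmax σ' < Cmax σ. Let q = L false σ − L false σ' be the net load transferred from machine false to machine true. Then Δ σ / 2 < q < Δ σ and Δ σ' = 2q − Δ σ < q. -/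
/-- Difference between maximum and minimum machine load. -/
def Δ {n : ℕ} (p : Fin n → ℝ) (σ : Fin n → Bool) : ℝ :=
  |load p false σ - load p true σ|

lemma load_total {n : ℕ} (p : Fin n → ℝ) (σ : Fin n → Bool) :
    load p false σ + load p true σ = ∑ j, p j := by
  unfold load
  rw [← Finset.sum_filter_add_sum_filter_not Finset.univ (fun j => σ j = false) p]
  congr 1
  apply Finset.sum_congr
  apply Finset.filter_congr
  intro j _
  simp [Bool.not_eq_false]
  intros; rfl

/-- If an improving step makes the critical machine change (from machine `false` to
machine `true`), then the net load `q` transferred from machine `false` to machine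
`true` satisfies `Δσ/2 < q < Δσ`, and `Δσ' = 2q - Δσ < q`. -/
theorem critical_machine_change (n : ℕ) (p : Fin n → ℝ) (hp : ∀ j, 0 ≤ p j)
    (σ σ' : Fin n → Bool)
    (hcrit : load p true σ < load p false σ)
    (hcrit' : load p false σ' < load p true σ')
    (himp : Cmax p σ' < Cmax p σ) :
    Δ p σ / 2 < load p false σ - load p false σ' ∧
    load p false σ - load p false σ' < Δ p σ ∧
    Δ p σ' = 2 * (load p false σ - load p false σ') - Δ p σ ∧
    Δ p σ' < load p false σ - load p false σ' := by
  have htot : load p false σ + load p true σ = load p false σ' + load p true σ' := by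
    rw [load_total, load_total]
  have hC : Cmax p σ = load p false σ := max_eq_left hcrit.le
  have hC' : Cmax p σ' = load p true σ' := max_eq_right hcrit'.le
  have hD : Δ p σ = load p false σ - load p true σ := abs_of_pos (by linarith)
  have hD' : Δ p σ' = load p true σ' - load p false σ' := by
    rw [Δ, abs_sub_comm]; exact abs_of_pos (by linarith)
  rw [hC, hC'] at himp
  constructor
  · linarith
  constructor
  · linarith
  constructor
  · linarith
  · linarith
end

section
/- Let σ₀, σ₁, …, σ_T be a sequence of schedules for an instance with n jobs such that for every t < T, σ_{t+1} is an improving 2-swap neighbor of σ_t. Then the number of indices t < T at which the critical machine changes — i.e., at which there is a machine b with L b σ_t > L (¬b) σ_t and L (¬b) σ_{t+1} > L b σ_{t+1} — is at most n². -/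
lemma load_add {n : ℕ} (p : Fin n → ℝ) (b : Bool) (σ : Fin n → Bool) :
    load p b σ + load p (!b) σ = ∑ j, p j := by
  rw [load, load, ← Finset.sum_filter_add_sum_filter_not Finset.univ (fun j => σ j = b) p]
  congr 1
  refine Finset.sum_congr ?_ (fun _ _ => rfl)
  apply Finset.filter_congr
  intro j _
  cases b <;> cases h : σ j <;> simp

lemma cmax_eq {n : ℕ} (p : Fin n → ℝ) (b : Bool) (σ : Fin n → Bool)
    (h : load p (!b) σ < load p b σ) : Cmax p σ = load p b σ := by
  cases b <;> simp only [Bool.not_true, Bool.not_false] at h <;> simp [Cmax, le_of_lt h]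

lemma load_diff {n : ℕ} (p : Fin n → ℝ) (σ σ' : Fin n → Bool) (c : Bool) :
    load p c σ' - load p c σ = ∑ j ∈ Finset.univ.filter (fun j => σ j ≠ σ' j),
      ((if σ' j = c then p j else 0) - (if σ j = c then p j else 0)) := by
  rw [load, load, Finset.sum_filter, Finset.sum_filter, ← Finset.sum_sub_distrib]
  symm
  apply Finset.sum_subset (Finset.filter_subset _ _)
  intro j _ hj
  simp only [Finset.mem_filter, Finset.mem_univ, true_and, not_not] at hj
  rw [hj]
  ring

lemma pair_eq {n : ℕ} {i j a c : Fin n} (hij : i < j) (hac : a < c)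
    (h : ({i, j} : Finset (Fin n)) = {a, c}) : i = a ∧ j = c := by
  have hi : i = a ∨ i = c := by
    have h2 : i ∈ ({a, c} : Finset (Fin n)) := by rw [← h]; simp
    simpa using h2
  have hj : j = a ∨ j = c := by
    have h2 : j ∈ ({a, c} : Finset (Fin n)) := by rw [← h]; simp
    simpa using h2
  rcases hi with rfl | rfl
  · refine ⟨rfl, ?_⟩
    rcases hj with rfl | rfl
    · exact absurd hij (lt_irrefl _)
    · rfl
  · rcases hj with rfl | rfl
    · exact absurd (hac.trans hij) (lt_irrefl _)
    · exact absurd hij (lt_irrefl _)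

lemma bool_aux2 (x y : Bool) (h : x ≠ y) : (!x) ≠ (!y) := by
  cases x <;> cases y <;> simp_all

lemma bool_aux : ∀ x y z : Bool, x ≠ y → ¬(x = z) → y = z := by decide

noncomputable def keyPair {n : ℕ} [Inhabited (Fin n)] (τ τ' : Fin n → Bool) : Fin n × Fin n :=
  if h1 : ∃ i, Finset.univ.filter (fun j => τ j ≠ τ' j) = {i} then (h1.choose, h1.choose)
  else if h2 : ∃ q : Fin n × Fin n, q.1 < q.2 ∧
      Finset.univ.filter (fun j => τ j ≠ τ' j) = {q.1, q.2} ∧ τ q.1 ≠ τ q.2 then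
    (h2.choose.2, h2.choose.1)
  else if h3 : ∃ q : Fin n × Fin n, q.1 < q.2 ∧
      Finset.univ.filter (fun j => τ j ≠ τ' j) = {q.1, q.2} then h3.choose
  else default

noncomputable def vval {n : ℕ} (p : Fin n → ℝ) (q : Fin n × Fin n) : ℝ :=
  if q.1 = q.2 then p q.1 else if q.1 < q.2 then p q.1 + p q.2 else |p q.1 - p q.2|

lemma key_val {n : ℕ} [Inhabited (Fin n)] (p : Fin n → ℝ) (hp : ∀ j, 0 ≤ p j)
    (τ τ' : Fin n → Bool) (b : Bool)
    (hcard : (Finset.univ.filter (fun j => τ j ≠ τ' j)).card ≤ 2)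
    {d : ℝ} (hd : d = load p (!b) τ' - load p (!b) τ) (hd0 : 0 < d) :
    d = vval p (keyPair τ τ') := by
  set M : Finset (Fin n) := Finset.univ.filter (fun j => τ j ≠ τ' j) with hMdef
  have hdsum : d = ∑ j ∈ M, ((if τ' j = !b then p j else 0) - (if τ j = !b then p j else 0)) := by
    rw [hd, load_diff]
  have hterm : ∀ j ∈ M, ((if τ' j = !b then p j else 0) - (if τ j = !b then p j else 0))
      = if τ' j = !b then p j else -p j := by
    intro j hj
    have hne : τ j ≠ τ' j := by
      have h := hj; rw [hMdef, Finset.mem_filter] at h; exact h.2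
    cases hτ : τ j <;> cases hτ' : τ' j <;> rw [hτ, hτ'] at hne <;>
      simp_all <;> cases b <;> simp_all
  have hflip : ∀ j ∈ M, τ' j = !τ j := by
    intro j hj
    have hne : τ j ≠ τ' j := by
      have h := hj; rw [hMdef, Finset.mem_filter] at h; exact h.2
    cases hτ : τ j <;> cases hτ' : τ' j <;> rw [hτ, hτ'] at hne <;> simp_all
  have h012 : M.card = 0 ∨ M.card = 1 ∨ M.card = 2 := by omega
  rcases h012 with h0 | h1 | h2
  · rw [Finset.card_eq_zero] at h0
    rw [h0, Finset.sum_empty] at hdsum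
    linarith
  · obtain ⟨i, hi⟩ := Finset.card_eq_one.mp h1
    have hex1 : ∃ x, M = {x} := ⟨i, hi⟩
    rw [keyPair, dif_pos hex1]
    have hch : hex1.choose = i :=
      (Finset.singleton_injective (hi.symm.trans hex1.choose_spec)).symm
    rw [hi, Finset.sum_singleton] at hdsum
    rw [hterm i (by rw [hi]; simp)] at hdsum
    rw [hch, vval]
    simp only [if_pos rfl]
    by_cases hc : τ' i = !b
    · rw [if_pos hc] at hdsum; exact hdsum
    · rw [if_neg hc] at hdsum
      have := hp i
      linarith
  · obtain ⟨a, c, hac, hM0⟩ := Finset.card_eq_two.mp h2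
    obtain ⟨i, j, hij, hM⟩ : ∃ i j : Fin n, i < j ∧ M = {i, j} := by
      rcases lt_or_gt_of_ne hac with h | h
      · exact ⟨a, c, h, hM0⟩
      · exact ⟨c, a, h, by rw [hM0, Finset.pair_comm]⟩
    have hijne : i ≠ j := ne_of_lt hij
    have hnot1 : ¬∃ x, M = {x} := by
      rintro ⟨x, hx⟩
      rw [hx, Finset.card_singleton] at h2
      omega
    have hiM : i ∈ M := by rw [hM]; simp
    have hjM : j ∈ M := by rw [hM]; simp
    rw [hM, Finset.sum_pair hijne, hterm i hiM, hterm j hjM] at hdsum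
    have hfi := hflip i hiM
    have hfj := hflip j hjM
    by_cases hdir : τ i = τ j
    · -- same direction
      have hnot2 : ¬∃ q : Fin n × Fin n, q.1 < q.2 ∧ M = {q.1, q.2} ∧ τ q.1 ≠ τ q.2 := by
        rintro ⟨q, hq1, hq2, hq3⟩
        have hpe := pair_eq hij hq1 (hM.symm.trans hq2)
        rw [← hpe.1, ← hpe.2] at hq3
        exact hq3 hdir
      have hex3 : ∃ q : Fin n × Fin n, q.1 < q.2 ∧ M = {q.1, q.2} := ⟨(i, j), hij, hM⟩
      rw [keyPair, dif_neg hnot1, dif_neg hnot2, dif_pos hex3]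
      obtain ⟨hq1, hq2⟩ := hex3.choose_spec
      have hpe := pair_eq hij hq1 (hM.symm.trans hq2)
      have hchoose : hex3.choose = (i, j) := by
        rw [Prod.ext_iff]; exact ⟨hpe.1.symm, hpe.2.symm⟩
      rw [hchoose, vval]
      simp only
      rw [if_neg hijne, if_pos hij]
      have hsame' : τ' i = τ' j := by rw [hfi, hfj, hdir]
      by_cases hci : τ' i = !b
      · have hcj : τ' j = !b := by rw [← hsame']; exact hci
        rw [if_pos hci, if_pos hcj] at hdsum
        exact hdsum
      · have hcj : ¬ τ' j = !b := by rw [← hsame']; exact hci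
        rw [if_neg hci, if_neg hcj] at hdsum
        have := hp i
        have := hp j
        linarith
    · -- opposite directions
      have hex2 : ∃ q : Fin n × Fin n, q.1 < q.2 ∧ M = {q.1, q.2} ∧ τ q.1 ≠ τ q.2 :=
        ⟨(i, j), hij, hM, hdir⟩
      rw [keyPair, dif_neg hnot1, dif_pos hex2]
      obtain ⟨hq1, hq2, _⟩ := hex2.choose_spec
      have hpe := pair_eq hij hq1 (hM.symm.trans hq2)
      rw [← hpe.1, ← hpe.2]
      rw [vval]
      simp only
      rw [if_neg (ne_of_gt hij), if_neg (not_lt_of_gt hij)]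
      have hne' : τ' i ≠ τ' j := by
        rw [hfi, hfj]
        exact bool_aux2 _ _ hdir
      by_cases hci : τ' i = !b
      · have hcj : ¬ τ' j = !b := by
          intro h
          exact hne' (hci.trans h.symm)
        rw [if_pos hci, if_neg hcj] at hdsum
        have hd' : d = p i - p j := by linarith
        rw [hd'] at hd0 ⊢
        rw [abs_sub_comm, abs_of_pos hd0]
      · have hcj : τ' j = !b := bool_aux _ _ _ hne' hci
        rw [if_neg hci, if_pos hcj] at hdsum
        have hd' : d = p j - p i := by linarith
        rw [hd'] at hd0 ⊢
        rw [abs_of_pos hd0]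

/-- In a sequence of improving 2-swaps, the critical machine changes at most `n²`
times. -/
theorem critical_machine_changes_bound (n : ℕ) (p : Fin n → ℝ) (hp : ∀ j, 0 ≤ p j)
    (T : ℕ) (σ : ℕ → Fin n → Bool)
    (hstep : ∀ t < T,
      (Finset.univ.filter (fun j => σ t j ≠ σ (t + 1) j)).card ≤ 2 ∧
      Cmax p (σ (t + 1)) < Cmax p (σ t)) :
    ((Finset.range T).filter (fun t => ∃ b : Bool,
        load p (!b) (σ t) < load p b (σ t) ∧
        load p b (σ (t + 1)) < load p (!b) (σ (t + 1)))).card ≤ n ^ 2 := by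
  by_cases hn : n = 0
  · subst hn
    have hempty : ((Finset.range T).filter (fun t => ∃ b : Bool,
        load p (!b) (σ t) < load p b (σ t) ∧
        load p b (σ (t + 1)) < load p (!b) (σ (t + 1)))) = ∅ := by
      apply Finset.filter_eq_empty_iff.mpr
      rintro t _ ⟨b, hb1, _⟩
      simp [load] at hb1
    rw [hempty, Finset.card_empty]
    exact Nat.zero_le _
  haveI : Inhabited (Fin n) := ⟨⟨0, Nat.pos_of_ne_zero hn⟩⟩
  set P : ℝ := ∑ j, p j with hP
  set S := ((Finset.range T).filter (fun t => ∃ b : Bool,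
      load p (!b) (σ t) < load p b (σ t) ∧
      load p b (σ (t + 1)) < load p (!b) (σ (t + 1)))) with hS
  have mono : ∀ u, u ≤ T → ∀ s, s ≤ u → Cmax p (σ u) ≤ Cmax p (σ s) := by
    intro u
    induction u with
    | zero =>
      intro _ s hs
      have : s = 0 := Nat.le_zero.mp hs
      rw [this]
    | succ u ih =>
      intro hu s hs
      rcases Nat.eq_or_lt_of_le hs with h | h
      · rw [h]
      · have hlt : u < T := by omega
        exact le_trans (le_of_lt (hstep u hlt).2) (ih (by omega) s (by omega))
  have main : ∀ t ∈ S,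
      Cmax p (σ (t + 1)) < (P + vval p (keyPair (σ t) (σ (t + 1)))) / 2 ∧
      (P + vval p (keyPair (σ t) (σ (t + 1)))) / 2 < Cmax p (σ t) := by
    intro t ht
    rw [hS, Finset.mem_filter, Finset.mem_range] at ht
    obtain ⟨htT, b, hb1, hb2⟩ := ht
    have hPt : load p b (σ t) + load p (!b) (σ t) = P := load_add p b (σ t)
    have hPt' : load p b (σ (t + 1)) + load p (!b) (σ (t + 1)) = P := load_add p b (σ (t + 1))
    have hCt : Cmax p (σ t) = load p b (σ t) := cmax_eq p b (σ t) hb1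
    have hCt' : Cmax p (σ (t + 1)) = load p (!b) (σ (t + 1)) := by
      apply cmax_eq
      rw [Bool.not_not]
      exact hb2
    have hdec : Cmax p (σ (t + 1)) < Cmax p (σ t) := (hstep t htT).2
    rw [hCt, hCt'] at hdec
    set d : ℝ := load p (!b) (σ (t + 1)) - load p (!b) (σ t) with hddef
    have hd0 : 0 < d := by linarith
    have hdv : d = vval p (keyPair (σ t) (σ (t + 1))) :=
      key_val p hp (σ t) (σ (t + 1)) b (hstep t htT).1 hddef hd0
    rw [← hdv, hCt, hCt']
    constructor <;> linarith
  have claim : ∀ t ∈ S, ∀ t' ∈ S,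
      keyPair (σ t) (σ (t + 1)) = keyPair (σ t') (σ (t' + 1)) → ¬ t < t' := by
    intro t ht t' ht' heq hlt
    obtain ⟨h1t, _⟩ := main t ht
    obtain ⟨_, h2t'⟩ := main t' ht'
    rw [heq] at h1t
    have ht'T : t' < T := by
      have := (Finset.mem_filter.mp (hS ▸ ht')).1
      exact Finset.mem_range.mp this
    have hmono := mono t' (le_of_lt ht'T) (t + 1) (by omega)
    linarith
  have hinj : Set.InjOn (fun t => keyPair (σ t) (σ (t + 1))) ↑S := by
    intro t ht t' ht' heq
    by_contra hne
    rcases Ne.lt_or_gt hne with h | h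
    · exact claim t (Finset.mem_coe.mp ht) t' (Finset.mem_coe.mp ht') heq h
    · exact claim t' (Finset.mem_coe.mp ht') t (Finset.mem_coe.mp ht) heq.symm h
  calc S.card ≤ (Finset.univ : Finset (Fin n × Fin n)).card :=
        Finset.card_le_card_of_injOn _ (fun a _ => Finset.mem_univ _) hinj
    _ = n ^ 2 := by simp [pow_two]
end

section
/- Let σ₀, σ₁, …, σ_T be any sequence of schedules for an instance of P2||Cmax with n jobs such that for every t < T, σ_{t+1} is an improving 2-swap neighbor of σ_t. Then T ≤ (n² + 1)². In particular, starting from any schedule, iterative improvement with the 2-swap neighborhood reaches a 2-swap optimal solution after O(n⁴) improving iterations. -/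
namespace TwoSwap
open Finset
variable {n : ℕ}

def Dc (p : Fin n → ℝ) (c : Bool) (σ : Fin n → Bool) : ℝ :=
  ∑ j, if σ j = c then p j else -p j

lemma Dc_true (p : Fin n → ℝ) (σ : Fin n → Bool) : Dc p true σ = - Dc p false σ := by
  unfold Dc
  rw [← Finset.sum_neg_distrib]
  apply Finset.sum_congr rfl
  intro j _
  cases h : σ j <;> simp [h]

lemma abs_Dc (p : Fin n → ℝ) (c : Bool) (σ : Fin n → Bool) :
    |Dc p c σ| = |Dc p false σ| := by
  cases c
  · rfl
  · rw [Dc_true, abs_neg]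

lemma D_eq_loads (p : Fin n → ℝ) (σ : Fin n → Bool) :
    Dc p false σ = load p false σ - load p true σ := by
  unfold Dc load
  rw [Finset.sum_filter, Finset.sum_filter, ← Finset.sum_sub_distrib]
  apply Finset.sum_congr rfl
  intro j _
  cases h : σ j <;> simp [h]

lemma loads_add (p : Fin n → ℝ) (σ : Fin n → Bool) :
    load p false σ + load p true σ = ∑ j, p j := by
  unfold load
  rw [Finset.sum_filter, Finset.sum_filter, ← Finset.sum_add_distrib]
  apply Finset.sum_congr rfl
  intro j _
  cases h : σ j <;> simp [h]

lemma Cmax_eq (p : Fin n → ℝ) (σ : Fin n → Bool) :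
    Cmax p σ = ((∑ j, p j) + |Dc p false σ|) / 2 := by
  have hD := D_eq_loads p σ
  have hS := loads_add p σ
  unfold Cmax
  rcases le_total (load p false σ) (load p true σ) with h | h
  · rw [max_eq_right h, hD, abs_of_nonpos (by linarith)]
    linarith
  · rw [max_eq_left h, hD, abs_of_nonneg (by linarith)]
    linarith

lemma sum_shift {β : Type*} [AddCommGroup β] (σ σ' : Fin n → Bool) (c : Bool) (g : Fin n → β) :
    (∑ j, if σ' j = c then g j else 0) =
      (∑ j, if σ j = c then g j else 0) -
        ∑ j ∈ Finset.univ.filter (fun j => σ j ≠ σ' j), (if σ j = c then g j else -g j) := by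
  rw [Finset.sum_filter, eq_sub_iff_add_eq, ← Finset.sum_add_distrib]
  apply Finset.sum_congr rfl
  intro j _
  by_cases h : σ j = σ' j
  · simp [h]
  · cases hj : σ j <;> cases hj' : σ' j <;> cases c <;> simp_all

lemma Dc_split (p : Fin n → ℝ) (c : Bool) (σ : Fin n → Bool) :
    Dc p c σ = (∑ j, if σ j = c then p j else 0) - (∑ j, if σ j = (!c) then p j else 0) := by
  unfold Dc
  rw [← Finset.sum_sub_distrib]
  apply Finset.sum_congr rfl
  intro j _
  cases h : σ j <;> cases c <;> simp [h]

lemma sum_not_c (p : Fin n → ℝ) (c : Bool) (σ : Fin n → Bool) (M : Finset (Fin n)) :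
    (∑ j ∈ M, (if σ j = (!c) then p j else -p j)) =
      - ∑ j ∈ M, (if σ j = c then p j else -p j) := by
  rw [← Finset.sum_neg_distrib]
  apply Finset.sum_congr rfl
  intro j _
  cases h : σ j <;> cases c <;> simp [h]

lemma Dc_step (p : Fin n → ℝ) (c : Bool) (σ σ' : Fin n → Bool) :
    Dc p c σ' = Dc p c σ -
      2 * ∑ j ∈ Finset.univ.filter (fun j => σ j ≠ σ' j), (if σ j = c then p j else -p j) := by
  rw [Dc_split, Dc_split, sum_shift σ σ' c p, sum_shift σ σ' (!c) p, sum_not_c]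
  ring

noncomputable def rnk (p : Fin n → ℝ) (j : Fin n) : ℕ :=
  (Finset.univ.filter fun k => p k < p j ∨ (p k = p j ∧ k ≤ j)).card

lemma one_le_rnk (p : Fin n → ℝ) (j : Fin n) : 1 ≤ rnk p j := by
  apply Finset.card_pos.mpr
  exact ⟨j, by simp⟩

lemma rnk_le (p : Fin n → ℝ) (j : Fin n) : rnk p j ≤ n := by
  refine (Finset.card_filter_le _ _).trans ?_
  simp

lemma rnk_lt_rnk (p : Fin n → ℝ) {i j : Fin n} (h : p j < p i) : rnk p j < rnk p i := by
  apply Finset.card_lt_card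
  rw [Finset.ssubset_iff_of_subset]
  · refine ⟨i, by simp, ?_⟩
    simp only [Finset.mem_filter, Finset.mem_univ, true_and]
    push_neg
    exact ⟨h.le, fun he => absurd he (ne_of_gt h)⟩
  · intro k hk
    simp only [Finset.mem_filter, Finset.mem_univ, true_and] at hk ⊢
    rcases hk with hk | ⟨hk, _⟩
    · exact Or.inl (hk.trans h)
    · exact Or.inl (hk ▸ h)

noncomputable def W (p : Fin n → ℝ) : Finset ℝ :=
  (Finset.univ ×ˢ Finset.univ : Finset (Fin n × Fin n)).image
    (fun ij => if ij.1 = ij.2 then p ij.1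
      else if ij.2 < ij.1 then |p ij.1 - p ij.2| else p ij.1 + p ij.2)

lemma W_card (p : Fin n → ℝ) : (W p).card ≤ n ^ 2 := by
  refine (Finset.card_image_le).trans ?_
  simp [sq]

lemma mem_W_single (p : Fin n → ℝ) (i : Fin n) : p i ∈ W p := by
  apply Finset.mem_image.mpr
  exact ⟨(i, i), by simp, by simp⟩

lemma mem_W_add (p : Fin n → ℝ) {i j : Fin n} (hij : i ≠ j) : p i + p j ∈ W p := by
  apply Finset.mem_image.mpr
  rcases lt_or_gt_of_ne hij with h | h
  · exact ⟨(i, j), by simp, by simp [hij, not_lt.mpr h.le, asymm h]⟩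
  · exact ⟨(j, i), by simp, by rw [add_comm]; simp [hij.symm, not_lt.mpr h.le, asymm h]⟩

lemma mem_W_sub (p : Fin n → ℝ) {i j : Fin n} (hij : i ≠ j) (h : 0 < p i - p j) :
    p i - p j ∈ W p := by
  apply Finset.mem_image.mpr
  rcases lt_or_gt_of_ne hij with hlt | hlt
  · refine ⟨(j, i), by simp, ?_⟩
    show (if j = i then p j else if i < j then |p j - p i| else p j + p i) = p i - p j
    rw [if_neg (by exact hij.symm), if_pos hlt, abs_sub_comm, abs_of_pos h]
  · refine ⟨(i, j), by simp, ?_⟩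
    show (if i = j then p i else if j < i then |p i - p j| else p i + p j) = p i - p j
    rw [if_neg hij, if_pos hlt, abs_of_pos h]

lemma struct (p : Fin n → ℝ) (hp : ∀ j, 0 ≤ p j) (M : Finset (Fin n)) (σ : Fin n → Bool)
    (c : Bool) (hM : M.card ≤ 2)
    (hw : 0 < ∑ j ∈ M, (if σ j = c then p j else -p j)) :
    (∃ i, M = {i} ∧ σ i = c) ∨
    (∃ i j, i ≠ j ∧ M = {i, j} ∧ σ i = c ∧ σ j = c) ∨
    (∃ i j, i ≠ j ∧ M = {i, j} ∧ σ i = c ∧ σ j ≠ c ∧ p j < p i) := by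
  have h0 : M.card = 0 ∨ M.card = 1 ∨ M.card = 2 := by omega
  rcases h0 with h0 | h0 | h0
  · rw [Finset.card_eq_zero] at h0
    subst h0; simp at hw
  · obtain ⟨i, rfl⟩ := Finset.card_eq_one.mp h0
    rw [Finset.sum_singleton] at hw
    by_cases hi : σ i = c
    · exact Or.inl ⟨i, rfl, hi⟩
    · rw [if_neg hi] at hw; linarith [hp i]
  · obtain ⟨i, j, hij, rfl⟩ := Finset.card_eq_two.mp h0
    rw [Finset.sum_pair hij] at hw
    by_cases hi : σ i = c <;> by_cases hj : σ j = c
    · exact Or.inr (Or.inl ⟨i, j, hij, rfl, hi, hj⟩)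
    · refine Or.inr (Or.inr ⟨i, j, hij, rfl, hi, hj, ?_⟩)
      rw [if_pos hi, if_neg hj] at hw; linarith
    · refine Or.inr (Or.inr ⟨j, i, hij.symm, Finset.pair_comm i j, hj, hi, ?_⟩)
      rw [if_neg hi, if_pos hj] at hw; linarith
    · rw [if_neg hi, if_neg hj] at hw; linarith [hp i, hp j]

/-- Number of candidate move values strictly below the current gap. -/
noncomputable def Ff (p : Fin n → ℝ) (σ : Fin n → Bool) : ℕ :=
  ((W p).filter fun v => v < |Dc p false σ|).card

noncomputable def Rz (p : Fin n → ℝ) (c : Bool) (σ : Fin n → Bool) : ℤ :=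
  ∑ j, if σ j = c then (rnk p j : ℤ) else 0

noncomputable def bt (p : Fin n → ℝ) (σ : Fin n → Bool) : Bool :=
  if 0 ≤ Dc p false σ then false else true

noncomputable def Φ (p : Fin n → ℝ) (σ : Fin n → Bool) : ℤ :=
  ((n : ℤ) ^ 2 + 1) * (Ff p σ) + Rz p (bt p σ) σ

lemma Ff_le (p : Fin n → ℝ) (σ : Fin n → Bool) : Ff p σ ≤ n ^ 2 :=
  (Finset.card_filter_le _ _).trans (W_card p)

lemma Rz_nonneg (p : Fin n → ℝ) (c : Bool) (σ : Fin n → Bool) : 0 ≤ Rz p c σ :=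
  Finset.sum_nonneg fun j _ => by positivity

lemma Rz_le (p : Fin n → ℝ) (c : Bool) (σ : Fin n → Bool) : Rz p c σ ≤ (n : ℤ) ^ 2 := by
  calc Rz p c σ ≤ ∑ _j : Fin n, (n : ℤ) := by
        apply Finset.sum_le_sum
        intro j _
        split
        · exact_mod_cast rnk_le p j
        · positivity
    _ = (n : ℤ) ^ 2 := by simp [sq, mul_comm]

lemma Φ_nonneg (p : Fin n → ℝ) (σ : Fin n → Bool) : 0 ≤ Φ p σ := by
  have h1 := Rz_nonneg p (bt p σ) σ
  have h2 : (0 : ℤ) ≤ ((n : ℤ) ^ 2 + 1) * (Ff p σ) := by positivity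
  unfold Φ; linarith

lemma Φ_le (p : Fin n → ℝ) (σ : Fin n → Bool) :
    Φ p σ ≤ ((n : ℤ) ^ 2 + 1) * (n : ℤ) ^ 2 + (n : ℤ) ^ 2 := by
  have h1 := Rz_le p (bt p σ) σ
  have h2 : ((n : ℤ) ^ 2 + 1) * (Ff p σ) ≤ ((n : ℤ) ^ 2 + 1) * (n : ℤ) ^ 2 := by
    have := Ff_le p σ
    have : (Ff p σ : ℤ) ≤ (n : ℤ) ^ 2 := by exact_mod_cast this
    nlinarith
  unfold Φ; linarith

lemma main_step (p : Fin n → ℝ) (hp : ∀ j, 0 ≤ p j) (σ σ' : Fin n → Bool)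
    (hcard : (Finset.univ.filter fun j => σ j ≠ σ' j).card ≤ 2)
    (hC : Cmax p σ' < Cmax p σ) : Φ p σ' < Φ p σ := by
  have habs : |Dc p false σ'| < |Dc p false σ| := by
    have h1 := Cmax_eq p σ
    have h2 := Cmax_eq p σ'
    rw [h1, h2] at hC
    linarith
  have hne : Dc p false σ ≠ 0 := by
    intro h
    rw [h, abs_zero] at habs
    linarith [abs_nonneg (Dc p false σ')]
  obtain ⟨c, hc, hcbt⟩ : ∃ c, 0 < Dc p c σ ∧ bt p σ = c := by
    rcases hne.lt_or_gt with h | h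
    · exact ⟨true, by rw [Dc_true]; linarith, by unfold bt; rw [if_neg (not_le.mpr h)]⟩
    · exact ⟨false, h, by unfold bt; rw [if_pos h.le]⟩
  have habs' : |Dc p c σ'| < |Dc p c σ| := by
    rw [abs_Dc p c σ', abs_Dc p c σ]; exact habs
  set M := Finset.univ.filter (fun j => σ j ≠ σ' j) with hMdef
  set w := ∑ j ∈ M, (if σ j = c then p j else -p j) with hwdef
  have hDstep : Dc p c σ' = Dc p c σ - 2 * w := Dc_step p c σ σ'
  have hw0 : 0 < w ∧ w < Dc p c σ := by
    rw [hDstep, abs_of_pos hc] at habs'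
    have := abs_lt.mp habs'
    constructor <;> linarith
  obtain ⟨hwpos, hwlt⟩ := hw0
  have hstruct := struct p hp M σ c hcard hwpos
  -- the rank-sum shift
  set sc := ∑ j ∈ M, (if σ j = c then (rnk p j : ℤ) else -(rnk p j : ℤ)) with hscdef
  have hRzstep : Rz p c σ' = Rz p c σ - sc := sum_shift σ σ' c _
  have hscpos : 0 < sc := by
    rcases hstruct with ⟨i, hMi, hi⟩ | ⟨i, j, hij, hMij, hi, hj⟩ | ⟨i, j, hij, hMij, hi, hj, hpij⟩
    · rw [hscdef, hMi, Finset.sum_singleton, if_pos hi]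
      exact_mod_cast one_le_rnk p i
    · rw [hscdef, hMij, Finset.sum_pair hij, if_pos hi, if_pos hj]
      have := one_le_rnk p i
      have := one_le_rnk p j
      omega
    · rw [hscdef, hMij, Finset.sum_pair hij, if_pos hi, if_neg hj]
      have := rnk_lt_rnk p hpij
      omega
  have hwW : w ∈ W p := by
    rcases hstruct with ⟨i, hMi, hi⟩ | ⟨i, j, hij, hMij, hi, hj⟩ | ⟨i, j, hij, hMij, hi, hj, hpij⟩
    · rw [hwdef, hMi, Finset.sum_singleton, if_pos hi]
      exact mem_W_single p i
    · rw [hwdef, hMij, Finset.sum_pair hij, if_pos hi, if_pos hj]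
      exact mem_W_add p hij
    · rw [hwdef, hMij, Finset.sum_pair hij, if_pos hi, if_neg hj]
      have : p i + -p j = p i - p j := by ring
      rw [this]
      exact mem_W_sub p hij (by linarith)
  have hFsub : ((W p).filter fun v => v < |Dc p false σ'|) ⊆
      ((W p).filter fun v => v < |Dc p false σ|) := by
    intro v hv
    rw [Finset.mem_filter] at hv ⊢
    exact ⟨hv.1, hv.2.trans habs⟩
  by_cases hpos : 0 < Dc p c σ'
  · -- same big machine
    have hb' : bt p σ' = c := by
      cases c
      · unfold bt; rw [if_pos hpos.le]
      · unfold bt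
        rw [Dc_true] at hpos
        rw [if_neg (by linarith)]
    have hF : Ff p σ' ≤ Ff p σ := Finset.card_le_card hFsub
    have hF' : (Ff p σ' : ℤ) ≤ (Ff p σ : ℤ) := by exact_mod_cast hF
    have hmul : ((n : ℤ) ^ 2 + 1) * (Ff p σ' : ℤ) ≤ ((n : ℤ) ^ 2 + 1) * (Ff p σ : ℤ) := by
      apply mul_le_mul_of_nonneg_left hF'
      positivity
    unfold Φ
    rw [hb', hcbt]
    have : Rz p c σ' < Rz p c σ := by rw [hRzstep]; linarith
    linarith
  · -- reflection: the gap drops below w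
    push_neg at hpos
    have hΔ' : |Dc p c σ'| = 2 * w - Dc p c σ := by
      rw [hDstep, abs_of_nonpos (by linarith)]
      ring
    have hF : Ff p σ' < Ff p σ := by
      apply Finset.card_lt_card
      rw [Finset.ssubset_iff_of_subset hFsub]
      refine ⟨w, ?_, ?_⟩
      · rw [Finset.mem_filter]
        refine ⟨hwW, ?_⟩
        rw [← abs_Dc p c σ, abs_of_pos hc]
        exact hwlt
      · rw [Finset.mem_filter]
        rintro ⟨-, hcon⟩
        rw [← abs_Dc p c σ', hΔ'] at hcon
        linarith
    have hF' : (Ff p σ' : ℤ) + 1 ≤ (Ff p σ : ℤ) := by exact_mod_cast hF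
    have hR1 : Rz p (bt p σ') σ' ≤ (n : ℤ) ^ 2 := Rz_le p _ σ'
    have hR2 : 0 ≤ Rz p (bt p σ) σ := Rz_nonneg p _ σ
    have hmul : ((n : ℤ) ^ 2 + 1) * (Ff p σ' : ℤ) ≤
        ((n : ℤ) ^ 2 + 1) * (Ff p σ : ℤ) - ((n : ℤ) ^ 2 + 1) := by
      nlinarith [sq_nonneg (n : ℤ)]
    unfold Φ
    linarith

end TwoSwap

/-- Any sequence of improving 2-swaps on an instance of `P2||Cmax` with `n` jobs has
length at most `(n² + 1)²`; i.e., iterative improvement with the 2-swap neighborhood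
reaches a local optimum after `O(n⁴)` improving iterations. -/
theorem two_swap_convergence (n : ℕ) (p : Fin n → ℝ) (hp : ∀ j, 0 ≤ p j)
    (T : ℕ) (σ : ℕ → Fin n → Bool)
    (hstep : ∀ t < T,
      (Finset.univ.filter (fun j => σ t j ≠ σ (t + 1) j)).card ≤ 2 ∧
      Cmax p (σ (t + 1)) < Cmax p (σ t)) :
    T ≤ (n ^ 2 + 1) ^ 2 := by
  have key : ∀ t, t ≤ T → (t : ℤ) + TwoSwap.Φ p (σ t) ≤ TwoSwap.Φ p (σ 0) := by
    intro t
    induction t with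
    | zero => intro _; simp
    | succ k ih =>
      intro hk
      have hk' : k < T := by omega
      have h1 := TwoSwap.main_step p hp (σ k) (σ (k + 1)) (hstep k hk').1 (hstep k hk').2
      have h2 := ih (by omega)
      push_cast
      linarith
  have h0 := key T le_rfl
  have hT := TwoSwap.Φ_nonneg p (σ T)
  have hB := TwoSwap.Φ_le p (σ 0)
  have : (T : ℤ) ≤ ((n : ℤ) ^ 2 + 1) ^ 2 := by nlinarith
  exact_mod_cast this
end

section
/- In the exponential lower-bound instance with parameter n ≥ 1, let σ be any schedule in which job ℓ and job a₁ are on machine 1 and jobs b₁ and c₁ are on machine 2 (the remaining jobs assigned arbitrarily), and let σ' be the schedule obtained from σ by moving a₁ to machine 2 and moving b₁ and c₁ to machine 1, leaving all other jobs unchanged. Then σ' differs from σ on exactly 3 jobs and Cmax σ' < Cmax σ. -/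
/-- The jobs of the exponential lower-bound instance with parameter `n`:
jobs `a i`, `b i`, `c i` for each `i : Fin n` (`i` standing for the 1-based index
`i + 1`), together with the large job `l`. -/
inductive LBJob (n : ℕ) where
  | a (i : Fin n)
  | b (i : Fin n)
  | c (i : Fin n)
  | l
  deriving DecidableEq, Fintype

/-- Processing times of the lower-bound instance: with 1-based index `i' = i + 1`,
`p (a i') = 2^(n+i'+1) + 2^(i'-1)`, `p (b i') = 2^(n+i')`,
`p (c i') = 2^(n+i'-1) + 2^(i'-1)`, and `p l = 2^(2n+4)`. -/
def lbp (n : ℕ) : LBJob n → ℕ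
  | .a i => 2 ^ (n + i.1 + 2) + 2 ^ i.1
  | .b i => 2 ^ (n + i.1 + 1)
  | .c i => 2 ^ (n + i.1) + 2 ^ i.1
  | .l => 2 ^ (2 * n + 4)

/-- Load of a machine (`false` = machine 1, `true` = machine 2). -/
def lbLoad (n : ℕ) (m : Bool) (σ : LBJob n → Bool) : ℕ :=
  ∑ j ∈ Finset.univ.filter (fun j => σ j = m), lbp n j

/-- Makespan of a schedule of the lower-bound instance. -/
def lbCmax (n : ℕ) (σ : LBJob n → Bool) : ℕ :=
  max (lbLoad n false σ) (lbLoad n true σ)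

/-
The jobs `aᵢ, bᵢ, cᵢ` together weigh less than `2^(n+i+3)`, so all jobs other than `ℓ` weigh
less than `2^(2n+4) = p(ℓ)`; hence the makespan of any schedule is the load of the machine
carrying `ℓ`, machine 1 under both `σ` and `σ'`. The swap replaces `a₁` there by `b₁` and `c₁`,
and `p(b₁) + p(c₁) = 3 · 2ⁿ + 1 < 4 · 2ⁿ + 1 = p(a₁)`, so that load strictly drops.
-/

theorem Fintype.sum_add_sum_eq_of_eqOn_compl {α M : Type*} [Fintype α] [DecidableEq α]
    [AddCommMonoid M] {f g : α → M} (t : Finset α) (h : ∀ j ∉ t, f j = g j) :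
    ∑ j, f j + ∑ j ∈ t, g j = ∑ j, g j + ∑ j ∈ t, f j := by
  have hcompl : ∑ j ∈ Finset.univ \ t, f j = ∑ j ∈ Finset.univ \ t, g j :=
    Finset.sum_congr rfl fun j hj => h j (Finset.mem_sdiff.1 hj).2
  rw [← Finset.sum_sdiff (Finset.subset_univ t) (f := f),
    ← Finset.sum_sdiff (Finset.subset_univ t) (f := g), hcompl, add_right_comm]

theorem Finset.filter_ne_eq_of_eqOn_compl {α β : Type*} [Fintype α] [DecidableEq β] {σ σ' : α → β} {t : Finset α} (hout : ∀ j ∉ t, σ' j = σ j)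
    (hin : ∀ j ∈ t, σ' j ≠ σ j) :
    Finset.univ.filter (fun j => σ j ≠ σ' j) = t := by
  ext j
  by_cases hj : j ∈ t
  · simpa [hj] using (hin j hj).symm
  · simpa [hj] using (hout j hj).symm

namespace LBJob

variable {n : ℕ}

def equivSum (n : ℕ) : LBJob n ≃ Fin n ⊕ Fin n ⊕ Fin n ⊕ Unit where
  toFun
    | .a i => .inl i
    | .b i => .inr (.inl i)
    | .c i => .inr (.inr (.inl i))
    | .l => .inr (.inr (.inr ()))
  invFun
    | .inl i => .a i
    | .inr (.inl i) => .b i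
    | .inr (.inr (.inl i)) => .c i
    | .inr (.inr (.inr _)) => .l
  left_inv j := by cases j <;> rfl
  right_inv x := by rcases x with i | i | i | u <;> rfl

theorem sum_lbp (n : ℕ) :
    ∑ j, lbp n j = ∑ i, (lbp n (.a i) + lbp n (.b i) + lbp n (.c i)) + lbp n .l := by
  rw [← (equivSum n).symm.sum_comp]
  simp only [Fintype.sum_sum_type, Finset.univ_unique, Finset.sum_singleton,
    Finset.sum_add_distrib]
  simp only [equivSum, Equiv.coe_fn_symm_mk, add_assoc]

theorem lbp_a_add_lbp_b_add_lbp_c_le (i : Fin n) :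
    lbp n (.a i) + lbp n (.b i) + lbp n (.c i) ≤ 2 ^ (n + 4) * 2 ^ i.1 := by
  have hi : 2 ^ i.1 ≤ 2 ^ (n + i.1) := Nat.pow_le_pow_right two_pos (Nat.le_add_left _ _)
  simp only [lbp, pow_add] at hi ⊢
  generalize 2 ^ n = x, 2 ^ i.1 = y at *
  linarith

theorem sum_lbp_lt_two_mul_lbp_l (n : ℕ) : ∑ j, lbp n j < 2 * lbp n .l := by
  have hsmall : ∑ i : Fin n, (lbp n (.a i) + lbp n (.b i) + lbp n (.c i)) < lbp n .l :=
    calc _ ≤ ∑ i : Fin n, 2 ^ (n + 4) * 2 ^ i.1 :=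
          Finset.sum_le_sum fun i _ => lbp_a_add_lbp_b_add_lbp_c_le i
      _ = 2 ^ (n + 4) * ∑ k ∈ Finset.range n, 2 ^ k := by
          rw [← Finset.mul_sum, Fin.sum_univ_eq_sum_range (fun k => 2 ^ k)]
      _ < 2 ^ (n + 4) * 2 ^ n :=
          Nat.mul_lt_mul_of_pos_left (Nat.geomSum_lt le_rfl fun _ => Finset.mem_range.1)
            (by positivity)
      _ = lbp n .l := by rw [lbp, ← pow_add]; ring_nf
  rw [sum_lbp]
  omega

theorem lbp_b_add_lbp_c_lt_lbp_a (i : Fin n) : lbp n (.b i) + lbp n (.c i) < lbp n (.a i) := by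
  simp only [lbp, pow_succ]
  nlinarith [Nat.one_le_two_pow (n := n + i.1)]

theorem lbLoad_add_lbLoad_not (m : Bool) (σ : LBJob n → Bool) :
    lbLoad n m σ + lbLoad n (!m) σ = ∑ j, lbp n j := by
  rw [← Finset.sum_filter_add_sum_filter_not Finset.univ (fun j => σ j = m)]
  simp only [lbLoad, Bool.eq_not_iff]

theorem lbp_l_le_lbLoad {m : Bool} {σ : LBJob n → Bool} (h : σ .l = m) :
    lbp n .l ≤ lbLoad n m σ :=
  Finset.single_le_sum (fun _ _ => Nat.zero_le _) (by simp [h])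

theorem lbCmax_eq_lbLoad {m : Bool} {σ : LBJob n → Bool} (h : σ .l = m) :
    lbCmax n σ = lbLoad n m σ := by
  have hlt : lbLoad n (!m) σ < lbLoad n m σ := by
    have := lbLoad_add_lbLoad_not m σ
    have := lbp_l_le_lbLoad h
    have := sum_lbp_lt_two_mul_lbp_l n
    omega
  cases m
  · exact max_eq_left hlt.le
  · exact max_eq_right hlt.le

theorem lbLoad_add_sum_eq_of_eqOn_compl {σ σ' : LBJob n → Bool} {t : Finset (LBJob n)}
    (h : ∀ j ∉ t, σ' j = σ j) (m : Bool) :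
    lbLoad n m σ' + ∑ j ∈ t with σ j = m, lbp n j =
      lbLoad n m σ + ∑ j ∈ t with σ' j = m, lbp n j := by
  simp only [lbLoad, Finset.sum_filter]
  exact Fintype.sum_add_sum_eq_of_eqOn_compl t fun j hj => by rw [h j hj]

end LBJob

theorem lb_first_swap_general (n : ℕ) (i1 : Fin n)
    (σ σ' : LBJob n → Bool)
    (hl : σ .l = false)
    (ha : σ (.a i1) = false) (hb : σ (.b i1) = true) (hc : σ (.c i1) = true)
    (h'a : σ' (.a i1) = true) (h'b : σ' (.b i1) = false) (h'c : σ' (.c i1) = false)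
    (h'rest : ∀ j : LBJob n, j ≠ .a i1 → j ≠ .b i1 → j ≠ .c i1 → σ' j = σ j) :
    (Finset.univ.filter (fun j => σ j ≠ σ' j)).card = 3 ∧
    lbCmax n σ' < lbCmax n σ := by
  have hout : ∀ j ∉ ({.a i1, .b i1, .c i1} : Finset (LBJob n)), σ' j = σ j := fun j hj => by
    simp only [Finset.mem_insert, Finset.mem_singleton, not_or] at hj
    exact h'rest j hj.1 hj.2.1 hj.2.2
  have hchanged := Finset.filter_ne_eq_of_eqOn_compl hout (by simp [ha, hb, hc, h'a, h'b, h'c])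
  refine ⟨Finset.card_eq_three.2 ⟨_, _, _, by simp, by simp, by simp, hchanged⟩, ?_⟩
  have hswap : lbLoad n false σ' + lbp n (.a i1) =
      lbLoad n false σ + (lbp n (.b i1) + lbp n (.c i1)) := by
    simpa [Finset.filter_insert, Finset.filter_singleton, ha, hb, hc, h'a, h'b, h'c] using
      LBJob.lbLoad_add_sum_eq_of_eqOn_compl hout false
  rw [LBJob.lbCmax_eq_lbLoad hl, LBJob.lbCmax_eq_lbLoad (hout .l (by simp) ▸ hl)]
  have := LBJob.lbp_b_add_lbp_c_lt_lbp_a i1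
  omega

/-- Lemma (first improving 3-swap): if `ℓ` and `a₁` are on machine 1 and `b₁, c₁` are
on machine 2, then moving `a₁` to machine 2 and `b₁, c₁` to machine 1 changes exactly
3 jobs and strictly decreases the makespan. -/
theorem lb_first_swap (n : ℕ) (hn : 1 ≤ n) (i1 : Fin n) (hi1 : i1.1 = 0)
    (σ σ' : LBJob n → Bool)
    (hl : σ .l = false)
    (ha : σ (.a i1) = false) (hb : σ (.b i1) = true) (hc : σ (.c i1) = true)
    (h'a : σ' (.a i1) = true) (h'b : σ' (.b i1) = false) (h'c : σ' (.c i1) = false)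
    (h'rest : ∀ j : LBJob n, j ≠ .a i1 → j ≠ .b i1 → j ≠ .c i1 → σ' j = σ j) :
    (Finset.univ.filter (fun j => σ j ≠ σ' j)).card = 3 ∧
    lbCmax n σ' < lbCmax n σ :=
  lb_first_swap_general n i1 σ σ' hl ha hb hc h'a h'b h'c h'rest
end

section
/- In the exponential lower-bound instance with parameter n, let j be an index with 3 ≤ j ≤ n, and let σ be any schedule in which job ℓ is on machine 1, job a_j is on machine 1, jobs b_j and c_j are on machine 2, and for every i with 1 ≤ i ≤ j−1, jobs b_i and c_i are on machine 1 and job a_i is on machine 2 (jobs with index greater than j assigned arbitrarily). Let σ' be the schedule that agrees with σ except that a_j is on machine 2, b_j and c_j are on machine 1, and for every i ≤ j−1, a_i is on machine 1 and b_i, c_i are on machine 2. Then there exists a sequence of schedules σ = τ₀, τ₁, …, τ_j = σ' such that for each s < j, τ_{s+1} differs from τ_s on exactly 3 jobs and Cmax τ_{s+1} < Cmax τ_s. -/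
section Switch

variable {α β : Type*} (m : α → ℕ) (σ σ' : α → β)

def switchAt (s : ℕ) (j : α) : β :=
  if m j < s then σ' j else σ j

theorem switchAt_zero : switchAt m σ σ' 0 = σ := by
  funext j
  simp [switchAt]

theorem switchAt_apply_of_le {s : ℕ} {j : α} (h : s ≤ m j) :
    switchAt m σ σ' s j = σ j := by
  simp [switchAt, Nat.not_lt.mpr h]

theorem switchAt_apply_of_eq {s : ℕ} {j : α} (h : σ j = σ' j) :
    switchAt m σ σ' s j = σ j := by
  unfold switchAt
  split_ifs <;> simp [h]

theorem switchAt_eq_right {s : ℕ} (h : ∀ j, σ j ≠ σ' j → m j < s) :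
    switchAt m σ σ' s = σ' := by
  funext j
  by_cases hj : σ j = σ' j
  · exact (switchAt_apply_of_eq m σ σ' hj).trans hj
  · simp [switchAt, h j hj]

theorem switchAt_ne_switchAt_succ_iff (s : ℕ) (j : α) :
    switchAt m σ σ' s j ≠ switchAt m σ σ' (s + 1) j ↔ m j = s ∧ σ j ≠ σ' j := by
  unfold switchAt
  rcases lt_trichotomy (m j) s with h | rfl | h
  · simp [h, h.trans (Nat.lt_succ_self s), h.ne]
  · simp
  · simp [h.not_gt, h.ne', Nat.not_lt.mpr (Nat.succ_le_of_lt h)]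

end Switch

namespace LBJob

variable {n : ℕ}

def equivOption : Option (Fin n ⊕ Fin n ⊕ Fin n) ≃ LBJob n where
  toFun
    | none => .l
    | some (.inl i) => .a i
    | some (.inr (.inl i)) => .b i
    | some (.inr (.inr i)) => .c i
  invFun
    | .l => none
    | .a i => some (.inl i)
    | .b i => some (.inr (.inl i))
    | .c i => some (.inr (.inr i))
  left_inv := by rintro (_ | i | i | i) <;> rfl
  right_inv := by rintro (i | i | i | _) <;> rfl

theorem sum_univ {M : Type*} [AddCommMonoid M] (f : LBJob n → M) :
    ∑ j, f j = ∑ i, (f (.a i) + f (.b i) + f (.c i)) + f .l := by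
  rw [← equivOption.sum_comp, Fintype.sum_option, Fintype.sum_sum_type, Fintype.sum_sum_type,
    Finset.sum_add_distrib, Finset.sum_add_distrib, add_comm]
  simp only [equivOption, Equiv.coe_fn_mk, add_assoc]

def IndexLE (J : Fin n) : LBJob n → Prop
  | .a i | .b i | .c i => i.1 ≤ J.1
  | .l => False

/-- The step at which a job is moved, with 0-based indices: step `0` moves `a J, b J, a (J-1)`,
step `1` moves `c J, b (J-1), c 0`, and step `t ≥ 2` moves `a (J-t), b (J-t), c (J+1-t)`.
The value on `l` and on jobs of index above `J` is irrelevant. -/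
def moveTime (J : Fin n) : LBJob n → ℕ
  | .a i => if J.1 ≤ i.1 + 1 then 0 else J.1 - i.1
  | .b i => J.1 - i.1
  | .c i => if i.1 = 0 then 1 else J.1 + 1 - i.1
  | .l => 0

theorem moveTime_le {J : Fin n} (hJ : 1 ≤ J.1) (j : LBJob n) : j.moveTime J ≤ J.1 := by
  cases j <;> grind [moveTime]

theorem moveTime_eq_zero_and_indexLE_iff {J k : Fin n} (hk : k.1 + 1 = J.1) (j : LBJob n) :
    j.moveTime J = 0 ∧ j.IndexLE J ↔ j = .a J ∨ j = .b J ∨ j = .a k := by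
  cases j <;> grind [moveTime, IndexLE, Fin.ext_iff]

theorem moveTime_eq_one_and_indexLE_iff {J k i₀ : Fin n} (hk : k.1 + 1 = J.1) (hi₀ : i₀.1 = 0)
    (j : LBJob n) :
    j.moveTime J = 1 ∧ j.IndexLE J ↔ j = .c J ∨ j = .b k ∨ j = .c i₀ := by
  cases j <;> grind [moveTime, IndexLE, Fin.ext_iff]

theorem moveTime_eq_and_indexLE_iff {J k k' : Fin n} {t : ℕ} (ht : 2 ≤ t) (hk : k.1 + t = J.1)
    (hk' : k'.1 = k.1 + 1) (j : LBJob n) :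
    j.moveTime J = t ∧ j.IndexLE J ↔ j = .a k ∨ j = .b k ∨ j = .c k' := by
  cases j <;> grind [moveTime, IndexLE, Fin.ext_iff]

end LBJob

section Loads

variable {n : ℕ}

theorem sum_lbp_erase_l_lt : ∑ j ∈ Finset.univ.erase .l, lbp n j < lbp n .l := by
  have hsplit := Finset.sum_erase_add Finset.univ (lbp n) (Finset.mem_univ .l)
  rw [LBJob.sum_univ, add_left_inj] at hsplit
  have hterm (i : Fin n) :
      lbp n (.a i) + lbp n (.b i) + lbp n (.c i) ≤ 2 ^ (n + 3) * 2 ^ i.1 := by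
    have h2n : 2 ≤ 2 ^ n := Nat.le_self_pow (by have := i.isLt; omega) 2
    simp only [lbp, pow_add, pow_succ]
    nlinarith [Nat.one_le_two_pow (n := i.1)]
  have hgeom : ∑ i : Fin n, 2 ^ i.1 < 2 ^ n := by
    rw [Fin.sum_univ_eq_sum_range (2 ^ ·)]
    exact Nat.geomSum_lt le_rfl fun k hk => Finset.mem_range.mp hk
  calc ∑ j ∈ Finset.univ.erase .l, lbp n j
      ≤ ∑ i : Fin n, 2 ^ (n + 3) * 2 ^ i.1 := hsplit ▸ Finset.sum_le_sum fun i _ => hterm i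
    _ = 2 ^ (n + 3) * ∑ i : Fin n, 2 ^ i.1 := (Finset.mul_sum ..).symm
    _ < 2 ^ (n + 3) * 2 ^ n := Nat.mul_lt_mul_of_pos_left hgeom (by positivity)
    _ ≤ lbp n .l := by rw [lbp, ← pow_add]; exact Nat.pow_le_pow_right two_pos (by omega)

theorem lbCmax_eq_lbLoad_false {σ : LBJob n → Bool} (hl : σ .l = false) :
    lbCmax n σ = lbLoad n false σ := by
  refine max_eq_left (le_of_lt ?_)
  calc lbLoad n true σ ≤ ∑ j ∈ Finset.univ.erase .l, lbp n j :=
        Finset.sum_le_sum_of_subset fun j hj => by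
          simp only [Finset.mem_filter, Finset.mem_univ, true_and] at hj
          exact Finset.mem_erase.mpr ⟨by rintro rfl; simp [hl] at hj, Finset.mem_univ j⟩
    _ < lbp n .l := sum_lbp_erase_l_lt
    _ ≤ lbLoad n false σ := Finset.single_le_sum (fun _ _ => Nat.zero_le _) (by simp [hl])

theorem lbLoad_add_sum_filter (b : Bool) {σ τ : LBJob n → Bool} {S : Finset (LBJob n)}
    (hS : ∀ j, σ j ≠ τ j ↔ j ∈ S) :
    lbLoad n b τ + ∑ j ∈ S with σ j = b, lbp n j
      = lbLoad n b σ + ∑ j ∈ S with σ j = !b, lbp n j := by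
  have hin : ∀ j ∈ S, τ j = !σ j := fun j hj => by
    have := (hS j).mpr hj
    cases h : σ j <;> simp_all
  have hout : ∀ j ∈ Sᶜ, τ j = σ j := fun j hj =>
    (not_not.mp (mt (hS j).mp (Finset.mem_compl.mp hj))).symm
  have hτS : ∑ j ∈ S, (if τ j = b then lbp n j else 0)
      = ∑ j ∈ S, if σ j = !b then lbp n j else 0 :=
    Finset.sum_congr rfl fun j hj => by cases b <;> simp [hin j hj]
  have hτSc : ∑ j ∈ Sᶜ, (if τ j = b then lbp n j else 0)
      = ∑ j ∈ Sᶜ, if σ j = b then lbp n j else 0 :=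
    Finset.sum_congr rfl fun j hj => by rw [hout j hj]
  simp only [lbLoad, Finset.sum_filter]
  rw [← Finset.sum_add_sum_compl S, hτS, hτSc,
    ← Finset.sum_add_sum_compl S fun j => if σ j = b then lbp n j else 0]
  ring

theorem lbCmax_lt_of_sum_filter_lt {σ τ : LBJob n → Bool} {S : Finset (LBJob n)}
    (hσ : σ .l = false) (hτ : τ .l = false) (hS : ∀ j, σ j ≠ τ j ↔ j ∈ S)
    (hp : ∑ j ∈ S with σ j = true, lbp n j < ∑ j ∈ S with σ j = false, lbp n j) :
    lbCmax n τ < lbCmax n σ := by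
  have := lbLoad_add_sum_filter false hS
  rw [lbCmax_eq_lbLoad_false hσ, lbCmax_eq_lbLoad_false hτ]
  simp only [Bool.not_false] at this
  omega

theorem lbp_b_add_lbp_a_lt {J k : Fin n} (hk : k.1 + 1 = J.1) :
    lbp n (.b J) + lbp n (.a k) < lbp n (.a J) := by
  simp only [lbp, ← hk, pow_succ, pow_add]
  nlinarith [Nat.one_le_two_pow (n := n), Nat.one_le_two_pow (n := k.1)]

theorem lbp_c_lt_lbp_b_add_lbp_c {J k i₀ : Fin n} (hk : k.1 + 1 = J.1) (hi₀ : i₀.1 = 0) :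
    lbp n (.c J) < lbp n (.b k) + lbp n (.c i₀) := by
  have hJ : 2 ^ (k.1 + 1) < 2 ^ n := hk ▸ Nat.pow_lt_pow_right one_lt_two J.isLt
  simp only [lbp, ← hk, hi₀, ← add_assoc, add_zero, pow_zero]
  omega

theorem lbp_a_lt_lbp_b_add_lbp_c {k k' : Fin n} (hk' : k'.1 = k.1 + 1) :
    lbp n (.a k) < lbp n (.b k) + lbp n (.c k') := by
  simp only [lbp, hk', pow_succ, pow_add]
  nlinarith [Nat.one_le_two_pow (n := n), Nat.one_le_two_pow (n := k.1)]

end Loads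

def IsImprovingThreeMove (n : ℕ) (σ τ : LBJob n → Bool) : Prop :=
  (Finset.univ.filter (fun j => σ j ≠ τ j)).card = 3 ∧ lbCmax n τ < lbCmax n σ

section ImprovingMoves

variable {n : ℕ} {m : LBJob n → ℕ} {σ σ' : LBJob n → Bool} {s : ℕ} {x y z : LBJob n}

theorem isImprovingThreeMove_switchAt (hl : σ .l = false) (hl' : σ' .l = false)
    (hS : ∀ j, m j = s ∧ σ j ≠ σ' j ↔ j = x ∨ j = y ∨ j = z)
    (hxy : x ≠ y) (hxz : x ≠ z) (hyz : y ≠ z)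
    (hp : ∑ j ∈ {x, y, z} with σ j = true, lbp n j
      < ∑ j ∈ {x, y, z} with σ j = false, lbp n j) :
    IsImprovingThreeMove n (switchAt m σ σ' s) (switchAt m σ σ' (s + 1)) := by
  have hτl (t : ℕ) : switchAt m σ σ' t .l = false :=
    (switchAt_apply_of_eq m σ σ' (hl.trans hl'.symm)).trans hl
  have hdiff (j : LBJob n) :
      switchAt m σ σ' s j ≠ switchAt m σ σ' (s + 1) j ↔ j ∈ ({x, y, z} : Finset _) := by
    simp [switchAt_ne_switchAt_succ_iff, hS]
  have hτs : ∀ j ∈ ({x, y, z} : Finset _), switchAt m σ σ' s j = σ j := fun j hj =>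
    switchAt_apply_of_le m σ σ' ((hS j).mpr (by simpa using hj)).1.ge
  refine ⟨Finset.card_eq_three.mpr ⟨x, y, z, hxy, hxz, hyz, by ext j; simpa using hdiff j⟩,
    lbCmax_lt_of_sum_filter_lt (hτl s) (hτl (s + 1)) hdiff ?_⟩
  convert hp using 2 <;> exact Finset.filter_congr fun j hj => by rw [hτs j hj]

theorem isImprovingThreeMove_switchAt_of_lbp_add_lt (hl : σ .l = false) (hl' : σ' .l = false)
    (hS : ∀ j, m j = s ∧ σ j ≠ σ' j ↔ j = x ∨ j = y ∨ j = z) (hyz : y ≠ z)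
    (hx : σ x = false) (hy : σ y = true) (hz : σ z = true) (hp : lbp n y + lbp n z < lbp n x) :
    IsImprovingThreeMove n (switchAt m σ σ' s) (switchAt m σ σ' (s + 1)) := by
  have hxy : x ≠ y := by rintro rfl; simp [hx] at hy
  have hxz : x ≠ z := by rintro rfl; simp [hx] at hz
  refine isImprovingThreeMove_switchAt hl hl' hS hxy hxz hyz ?_
  simpa [Finset.filter_insert, Finset.filter_singleton, hx, hy, hz, hxy, hxz, hyz] using hp

theorem isImprovingThreeMove_switchAt_of_lt_lbp_add (hl : σ .l = false) (hl' : σ' .l = false)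
    (hS : ∀ j, m j = s ∧ σ j ≠ σ' j ↔ j = x ∨ j = y ∨ j = z) (hyz : y ≠ z)
    (hx : σ x = true) (hy : σ y = false) (hz : σ z = false) (hp : lbp n x < lbp n y + lbp n z) :
    IsImprovingThreeMove n (switchAt m σ σ' s) (switchAt m σ σ' (s + 1)) := by
  have hxy : x ≠ y := by rintro rfl; simp [hx] at hy
  have hxz : x ≠ z := by rintro rfl; simp [hx] at hz
  refine isImprovingThreeMove_switchAt hl hl' hS hxy hxz hyz ?_
  simpa [Finset.filter_insert, Finset.filter_singleton, hx, hy, hz, hxy, hxz, hyz] using hp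

end ImprovingMoves

/-- Lemma (general step): let `j` be a (1-based) index with `3 ≤ j ≤ n`, encoded by
`jj : Fin n` with `jj + 1 = j`, i.e. `2 ≤ jj`. Suppose in `σ` job `ℓ` is on machine 1,
`a_j` is on machine 1, `b_j, c_j` are on machine 2, and for every `i < j` jobs
`b_i, c_i` are on machine 1 and `a_i` is on machine 2. Let `σ'` agree with `σ` except
that `a_j` is on machine 2, `b_j, c_j` are on machine 1, and for every `i < j`, `a_i`
is on machine 1 and `b_i, c_i` are on machine 2. Then `σ'` is reachable from `σ` by a
sequence of `j` improving steps, each changing the assignment of exactly 3 jobs. -/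
theorem lb_general_step (n : ℕ) (jj : Fin n) (hjj : 2 ≤ jj.1)
    (σ σ' : LBJob n → Bool)
    (hl : σ .l = false)
    (haj : σ (.a jj) = false) (hbj : σ (.b jj) = true) (hcj : σ (.c jj) = true)
    (hlow : ∀ i : Fin n, i.1 < jj.1 →
      σ (.b i) = false ∧ σ (.c i) = false ∧ σ (.a i) = true)
    (h'l : σ' .l = σ .l)
    (h'aj : σ' (.a jj) = true) (h'bj : σ' (.b jj) = false) (h'cj : σ' (.c jj) = false)
    (h'low : ∀ i : Fin n, i.1 < jj.1 →
      σ' (.a i) = false ∧ σ' (.b i) = true ∧ σ' (.c i) = true)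
    (h'high : ∀ i : Fin n, jj.1 < i.1 →
      σ' (.a i) = σ (.a i) ∧ σ' (.b i) = σ (.b i) ∧ σ' (.c i) = σ (.c i)) :
    ∃ τ : ℕ → LBJob n → Bool, τ 0 = σ ∧ τ (jj.1 + 1) = σ' ∧
      ∀ s < jj.1 + 1,
        (Finset.univ.filter (fun j => τ s j ≠ τ (s + 1) j)).card = 3 ∧
        lbCmax n (τ (s + 1)) < lbCmax n (τ s) := by
  have hσ'l : σ' .l = false := h'l.trans hl
  have hmoved (j : LBJob n) : σ j ≠ σ' j ↔ j.IndexLE jj := by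
    have hidx (i : Fin n) : (σ (.a i) ≠ σ' (.a i) ↔ i.1 ≤ jj.1) ∧
        (σ (.b i) ≠ σ' (.b i) ↔ i.1 ≤ jj.1) ∧
        (σ (.c i) ≠ σ' (.c i) ↔ i.1 ≤ jj.1) := by
      rcases lt_trichotomy i.1 jj.1 with h | h | h
      · simp [hlow i h, h'low i h, h.le]
      · obtain rfl := Fin.ext h
        simp [haj, hbj, hcj, h'aj, h'bj, h'cj]
      · simpa [h'high i h] using h
    rcases j with i | i | i | _
    exacts [(hidx i).1, (hidx i).2.1, (hidx i).2.2, by simp [LBJob.IndexLE, h'l]]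
  have hmovedAt (s : ℕ) (j : LBJob n) :
      j.moveTime jj = s ∧ σ j ≠ σ' j ↔ j.moveTime jj = s ∧ j.IndexLE jj := by
    rw [hmoved]
  obtain ⟨k, hk⟩ : ∃ k : Fin n, k.1 + 1 = jj.1 :=
    ⟨⟨jj.1 - 1, by omega⟩, by dsimp only; omega⟩
  refine ⟨switchAt (LBJob.moveTime jj) σ σ', switchAt_zero .., switchAt_eq_right _ _ _
    fun j _ => Nat.lt_succ_of_le (LBJob.moveTime_le (by omega) j), fun s hs => ?_⟩
  rcases s with _ | _ | t
  · exact isImprovingThreeMove_switchAt_of_lbp_add_lt hl hσ'l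
      (fun j => (hmovedAt 0 j).trans (LBJob.moveTime_eq_zero_and_indexLE_iff hk j)) (by simp)
      haj hbj (hlow k (by omega)).2.2 (lbp_b_add_lbp_a_lt hk)
  · obtain ⟨i₀, hi₀⟩ : ∃ i₀ : Fin n, i₀.1 = 0 := ⟨⟨0, by omega⟩, rfl⟩
    exact isImprovingThreeMove_switchAt_of_lt_lbp_add hl hσ'l
      (fun j => (hmovedAt 1 j).trans (LBJob.moveTime_eq_one_and_indexLE_iff hk hi₀ j)) (by simp)
      hcj (hlow k (by omega)).1 (hlow i₀ (by omega)).2.1 (lbp_c_lt_lbp_b_add_lbp_c hk hi₀)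
  · obtain ⟨i, hi⟩ : ∃ i : Fin n, i.1 + (t + 2) = jj.1 :=
      ⟨⟨jj.1 - (t + 2), by omega⟩, by dsimp only; omega⟩
    obtain ⟨i', hi'⟩ : ∃ i' : Fin n, i'.1 = i.1 + 1 := ⟨⟨i.1 + 1, by omega⟩, rfl⟩
    exact isImprovingThreeMove_switchAt_of_lt_lbp_add hl hσ'l
      (fun j => (hmovedAt (t + 2) j).trans (LBJob.moveTime_eq_and_indexLE_iff (by omega) hi hi' j))
      (by simp) (hlow i (by omega)).2.2 (hlow i (by omega)).1 (hlow i' (by omega)).2.1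
      (lbp_a_lt_lbp_b_add_lbp_c hi')
end
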